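/- arXiv:2108.04734 — 11 statements merged into one kernel-verified Lean document; each statement's English description precedes it below -/
import Mathlib

section
/- Let x be feasible for the primal LP (x ∈ P) and s feasible for the dual LP (s ∈ D, with some y satisfying Aᵀy + s = c). Then x minimizes cᵀx over P and y maximizes bᵀy over the dual feasible set if and only if xᵀs = 0. Moreover, if both P and D are nonempty, there exist x* ∈ P and s* ∈ D such that (x*)ᵀs* = 0 and x* + s* > 0 componentwise (strict complementarity). -/
/-!
Farkas' lemma is proved by induction on the number of generators of the cone: when the last
generator `u` violates the certificate `y` of the smaller cone, projecting everything onto `y⊥`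
along `u` removes `u` and turns a certificate or a representation for the projected vectors into
one for the original ones. For a skew-symmetric `K`, Farkas gives for each index `i` some `z ≥ 0`
with `K z ≥ 0` and `z i + (K z) i > 0`; their sum is Tucker's strictly complementary solution.
Tucker applied to the homogeneous self-dual system `A x = τ b`, `τ c - Aᵀ y ≥ 0`,
`bᵀy - cᵀx ≥ 0` gives a solution with `τ > 0`, since for `τ = 0` the vectors `x` and `y` would be
rays contradicting the feasibility of the dual and the primal problem; scaling by `τ⁻¹` yields a
strictly complementary primal-dual pair. Its duality gap `xᵀs = cᵀx - bᵀy` vanishes, which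
proves strong duality and hence the optimality criterion.
-/

open Matrix

variable {𝕜 : Type*} [Field 𝕜]

section Farkas

variable {ι κ : Type*} [Fintype ι]

def projAlong (u y : ι → 𝕜) : (ι → 𝕜) →ₗ[𝕜] ι → 𝕜 where
  toFun v := v - (v ⬝ᵥ y / u ⬝ᵥ y) • u
  map_add' v w := by simp only [add_dotProduct, add_div, add_smul]; abel
  map_smul' r v := by simp [smul_sub, smul_smul, mul_div_assoc]

lemma projAlong_apply (u y v : ι → 𝕜) : projAlong u y v = v - (v ⬝ᵥ y / u ⬝ᵥ y) • u := rfl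

lemma projAlong_dotProduct (u y v z : ι → 𝕜) :
    projAlong u y v ⬝ᵥ z = v ⬝ᵥ (z - (u ⬝ᵥ z / u ⬝ᵥ y) • y) := by
  simp only [projAlong_apply, sub_dotProduct, dotProduct_sub, smul_dotProduct, dotProduct_smul,
    smul_eq_mul, dotProduct_comm u z]
  ring

lemma projAlong_self {u y : ι → 𝕜} (h : u ⬝ᵥ y ≠ 0) : projAlong u y u = 0 := by
  simp [projAlong_apply, h]

lemma eq_smul_of_projAlong_eq_zero {u y v : ι → 𝕜} (h : projAlong u y v = 0) :
    v = (v ⬝ᵥ y / u ⬝ᵥ y) • u :=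
  sub_eq_zero.mp h

lemma Finset.sum_insert_update_smul {R M : Type*} [Semiring R] [AddCommMonoid M] [Module R M]
    [DecidableEq κ] {s : Finset κ} {j : κ} (hj : j ∉ s) (x : κ → R) (t : R) (a : κ → M) :
    ∑ k ∈ insert j s, Function.update x j t k • a k = t • a j + ∑ k ∈ s, x k • a k := by
  rw [Finset.sum_insert hj, Function.update_self]
  congr 1
  exact Finset.sum_congr rfl fun k hk => by rw [Function.update_of_ne (ne_of_mem_of_not_mem hk hj)]

variable [LinearOrder 𝕜] [IsStrictOrderedRing 𝕜]

theorem farkas_finset (s : Finset κ) (a : κ → ι → 𝕜) (b : ι → 𝕜) :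
    (∃ x : κ → 𝕜, 0 ≤ x ∧ ∑ k ∈ s, x k • a k = b) ∨
      ∃ y, (∀ k ∈ s, 0 ≤ a k ⬝ᵥ y) ∧ b ⬝ᵥ y < 0 := by
  classical
  induction s using Finset.induction_on generalizing a b with
  | empty =>
    by_cases hb : b = 0
    · exact Or.inl ⟨0, le_rfl, by simp [hb]⟩
    · have hbb : 0 < b ⬝ᵥ b := (Finset.sum_nonneg fun i _ => mul_self_nonneg (b i)).lt_of_ne'
        (mt dotProduct_self_eq_zero.mp hb)
      exact Or.inr ⟨-b, by simp, by simpa using hbb⟩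
  | insert j s hj ih =>
    rcases ih a b with ⟨x, hx, hxb⟩ | ⟨y, hy, hby⟩
    · refine Or.inl ⟨Function.update x j 0, le_update_iff.mpr ⟨le_rfl, fun k _ => hx k⟩, ?_⟩
      rw [Finset.sum_insert_update_smul hj, zero_smul, zero_add, hxb]
    by_cases hjy : 0 ≤ a j ⬝ᵥ y
    · exact Or.inr ⟨y, Finset.forall_mem_insert .. |>.mpr ⟨hjy, hy⟩, hby⟩
    push Not at hjy
    rcases ih (projAlong (a j) y ∘ a) (projAlong (a j) y b) with ⟨x, hx, hxb⟩ | ⟨z, hz, hbz⟩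
    · set r := b - ∑ k ∈ s, x k • a k
      have hr : r = (r ⬝ᵥ y / a j ⬝ᵥ y) • a j := eq_smul_of_projAlong_eq_zero <| by
        simp only [r, map_sub, map_sum, map_smul, ← hxb, Function.comp_apply, sub_self]
      have ht : 0 ≤ r ⬝ᵥ y / a j ⬝ᵥ y := by
        refine div_nonneg_of_nonpos ?_ hjy.le
        simp only [r, sub_dotProduct, sum_dotProduct, smul_dotProduct, smul_eq_mul]
        linarith [Finset.sum_nonneg fun k hk => mul_nonneg (hx k) (hy k hk)]
      refine Or.inl ⟨Function.update x j _, le_update_iff.mpr ⟨ht, fun k _ => hx k⟩, ?_⟩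
      rw [Finset.sum_insert_update_smul hj, ← hr, sub_add_cancel]
    · refine Or.inr ⟨z - (a j ⬝ᵥ z / a j ⬝ᵥ y) • y, ?_, by rwa [← projAlong_dotProduct]⟩
      rw [Finset.forall_mem_insert, ← projAlong_dotProduct, projAlong_self hjy.ne, zero_dotProduct]
      exact ⟨le_rfl, fun k hk => by rw [← projAlong_dotProduct]; exact hz k hk⟩

variable [Fintype κ]

theorem farkas (N : Matrix ι κ 𝕜) (b : ι → 𝕜) :
    (∃ x, 0 ≤ x ∧ N *ᵥ x = b) ∨ ∃ y, 0 ≤ Nᵀ *ᵥ y ∧ b ⬝ᵥ y < 0 := by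
  refine (farkas_finset Finset.univ Nᵀ b).imp (fun ⟨x, hx, hxb⟩ => ⟨x, hx, ?_⟩)
    fun ⟨y, hy, hby⟩ => ⟨y, fun k => hy k (Finset.mem_univ k), hby⟩
  simpa [mulVec_eq_sum, op_smul_eq_smul] using hxb

theorem farkas_le (M : Matrix ι κ 𝕜) (h : ι → 𝕜) :
    (∃ z, 0 ≤ z ∧ M *ᵥ z ≤ h) ∨ ∃ w, 0 ≤ w ∧ 0 ≤ Mᵀ *ᵥ w ∧ h ⬝ᵥ w < 0 := by
  classical
  rcases farkas (fromCols M (1 : Matrix ι ι 𝕜)) h with ⟨x, hx, hxh⟩ | ⟨w, hw, hhw⟩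
  · refine Or.inl ⟨x ∘ Sum.inl, fun j => hx _, fun i => ?_⟩
    rw [← hxh, fromCols_mulVec, one_mulVec]
    exact le_add_of_nonneg_right (hx _)
  · rw [transpose_fromCols, fromRows_mulVec, transpose_one, one_mulVec] at hw
    exact Or.inr ⟨w, fun i => hw (Sum.inr i), fun j => hw (Sum.inl j), hhw⟩

end Farkas

section Tucker

variable [LinearOrder 𝕜] [IsStrictOrderedRing 𝕜] {ι : Type*} [Fintype ι]

theorem exists_tucker_at {K : Matrix ι ι 𝕜} (hK : Kᵀ = -K) (i : ι) :
    ∃ z, 0 ≤ z ∧ 0 ≤ K *ᵥ z ∧ 0 < z i + (K *ᵥ z) i := by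
  classical
  rcases farkas_le (-K) (-Pi.single i 1) with ⟨z, hz, hKz⟩ | ⟨w, hw, hKw, hiw⟩
  · have hKz : Pi.single i 1 ≤ K *ᵥ z := by simpa [neg_mulVec] using hKz
    refine ⟨z, hz, (Pi.single_nonneg.mpr zero_le_one).trans hKz, ?_⟩
    have := hKz i
    rw [Pi.single_eq_same] at this
    exact add_pos_of_nonneg_of_pos (hz i) (zero_lt_one.trans_le this)
  · rw [transpose_neg, hK, neg_neg] at hKw
    have : 0 < w i := by simpa using hiw
    exact ⟨w, hw, hKw, add_pos_of_pos_of_nonneg this (hKw i)⟩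

theorem exists_tucker {K : Matrix ι ι 𝕜} (hK : Kᵀ = -K) :
    ∃ z, 0 ≤ z ∧ 0 ≤ K *ᵥ z ∧ ∀ i, 0 < z i + (K *ᵥ z) i := by
  choose z hz hKz hpos using exists_tucker_at hK
  refine ⟨∑ i, z i, Finset.sum_nonneg fun i _ => hz i, ?_, fun j => ?_⟩
  · rw [mulVec_sum]
    exact Finset.sum_nonneg fun i _ => hKz i
  · rw [mulVec_sum, Finset.sum_apply, Finset.sum_apply, ← Finset.sum_add_distrib]
    exact (hpos j).trans_le <| Finset.single_le_sum (f := fun i => z i j + (K *ᵥ z i) j)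
      (fun i _ => add_nonneg (hz i j) (hKz i j)) (Finset.mem_univ j)

theorem exists_tucker_free {m n : Type*} [Fintype m] [Fintype n] (G : Matrix m n 𝕜)
    {H : Matrix n n 𝕜} (hH : Hᵀ = -H) :
    ∃ y w, 0 ≤ w ∧ G *ᵥ w = 0 ∧ 0 ≤ H *ᵥ w - Gᵀ *ᵥ y ∧
      ∀ j, 0 < w j + (H *ᵥ w - Gᵀ *ᵥ y) j := by
  set K : Matrix ((m ⊕ m) ⊕ n) ((m ⊕ m) ⊕ n) 𝕜 :=
    fromBlocks 0 (fromRows G (-G)) (fromCols (-Gᵀ) Gᵀ) H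
  have hK : Kᵀ = -K := by
    simp [K, fromBlocks_transpose, transpose_fromRows, transpose_fromCols, fromBlocks_neg, hH]
  obtain ⟨z, hz, hKz, hpos⟩ := exists_tucker hK
  -- the free variable is `y = u - v` with `u, v ≥ 0`
  obtain ⟨u, v, w, rfl⟩ : ∃ u v w, z = Sum.elim (Sum.elim u v) w :=
    ⟨_, _, _, by ext ((i | i) | j) <;> rfl⟩
  have hKz_eq : K *ᵥ Sum.elim (Sum.elim u v) w =
      Sum.elim (Sum.elim (G *ᵥ w) (-(G *ᵥ w))) (H *ᵥ w - Gᵀ *ᵥ (u - v)) := by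
    simp only [K, fromBlocks_mulVec, Sum.elim_comp_inl, Sum.elim_comp_inr, zero_mulVec,
      zero_add, fromRows_mulVec, neg_mulVec, fromCols_mulVec_sumElim, mulVec_sub]
    congr 1
    abel
  rw [hKz_eq] at hKz hpos
  refine ⟨u - v, w, fun j => hz (Sum.inr j),
    le_antisymm (fun i => ?_) fun i => hKz (Sum.inl (Sum.inl i)),
    fun j => hKz (Sum.inr j), fun j => hpos (Sum.inr j)⟩
  simpa using hKz (Sum.inl (Sum.inr i))

end Tucker

section LinearProgramming

theorem replicateCol_mulVec_eq_smul {R ι m : Type*} [CommSemiring R] [Unique ι] (v : m → R)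
    (w : ι → R) :
    replicateCol ι v *ᵥ w = w default • v := by
  ext
  simp [mulVec, dotProduct, mul_comm]

variable {m n : Type*} [Fintype m] [Fintype n]
  (A : Matrix m n 𝕜) {b : m → 𝕜} {c : n → 𝕜} {x : n → 𝕜} {y : m → 𝕜} {s : n → 𝕜}

theorem dotProduct_eq_duality_gap (hx : A *ᵥ x = b) (hs : Aᵀ *ᵥ y + s = c) :
    x ⬝ᵥ s = c ⬝ᵥ x - b ⬝ᵥ y := by
  have hAyx : Aᵀ *ᵥ y ⬝ᵥ x = A *ᵥ x ⬝ᵥ y := by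
    rw [mulVec_transpose, ← dotProduct_mulVec, dotProduct_comm]
  rw [← hs, ← hx, add_dotProduct, hAyx, dotProduct_comm x]
  ring

variable [LinearOrder 𝕜] [IsStrictOrderedRing 𝕜]

theorem exists_selfDual_solution (b : m → 𝕜) (c : n → 𝕜) :
    ∃ (x : n → 𝕜) (τ : 𝕜) (y : m → 𝕜), 0 ≤ x ∧ 0 ≤ τ ∧ A *ᵥ x = τ • b ∧
      0 ≤ τ • c - Aᵀ *ᵥ y ∧ 0 ≤ b ⬝ᵥ y - c ⬝ᵥ x ∧ (∀ j, 0 < x j + (τ • c - Aᵀ *ᵥ y) j) ∧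
      0 < τ + (b ⬝ᵥ y - c ⬝ᵥ x) := by
  -- the skew-symmetric matrix `[[0, A, -b], [-Aᵀ, 0, c], [bᵀ, -cᵀ, 0]]`, with `y` free
  set G := fromCols A (replicateCol Unit (-b))
  set H : Matrix (n ⊕ Unit) (n ⊕ Unit) 𝕜 :=
    fromBlocks 0 (replicateCol Unit c) (-replicateRow Unit c) 0
  obtain ⟨y, w, hw, hGw, hs, hpos⟩ :=
    exists_tucker_free G (H := H) (by simp [H, fromBlocks_transpose, fromBlocks_neg])
  obtain ⟨x, τ, rfl⟩ : ∃ x τ, w = Sum.elim x fun _ => τ :=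
    ⟨_, w (Sum.inr ()), by ext (j | _) <;> rfl⟩
  have hG : G *ᵥ Sum.elim x (fun _ => τ) = A *ᵥ x - τ • b := by
    simp [G, replicateCol_mulVec_eq_smul, sub_eq_add_neg]
  have hslack : H *ᵥ Sum.elim x (fun _ => τ) - Gᵀ *ᵥ y =
      Sum.elim (τ • c - Aᵀ *ᵥ y) fun _ => b ⬝ᵥ y - c ⬝ᵥ x := by
    ext (j | _) <;> simp [G, H, fromBlocks_mulVec, transpose_fromCols,
      replicateCol_mulVec_eq_smul, replicateRow_mulVec_eq_const, neg_mulVec, neg_add_eq_sub]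
  rw [hG, sub_eq_zero] at hGw
  rw [hslack] at hs hpos
  exact ⟨x, τ, y, fun j => hw (Sum.inl j), hw (Sum.inr ()), hGw, fun j => hs (Sum.inl j),
    hs (Sum.inr ()), fun j => hpos (Sum.inl j), hpos (Sum.inr ())⟩

theorem weak_duality (hx : A *ᵥ x = b) (hx₀ : 0 ≤ x) (hs : Aᵀ *ᵥ y + s = c) (hs₀ : 0 ≤ s) :
    b ⬝ᵥ y ≤ c ⬝ᵥ x := by
  linarith [dotProduct_eq_duality_gap A hx hs, dotProduct_nonneg_of_nonneg hx₀ hs₀]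

theorem exists_strictly_complementary (hx : A *ᵥ x = b) (hx₀ : 0 ≤ x) (hs : Aᵀ *ᵥ y + s = c)
    (hs₀ : 0 ≤ s) :
    ∃ x' y' s', A *ᵥ x' = b ∧ 0 ≤ x' ∧ Aᵀ *ᵥ y' + s' = c ∧ 0 ≤ s' ∧ x' ⬝ᵥ s' = 0 ∧
      ∀ j, 0 < x' j + s' j := by
  obtain ⟨u, τ, v, hu, hτ, hAu, hv, hgap, hpos, hκ⟩ := exists_selfDual_solution A b c
  have hτ_pos : 0 < τ := by
    refine hτ.lt_of_ne' fun hτ₀ => ?_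
    subst hτ₀
    -- `u` is primal feasible for the right-hand side `0`, `v` dual feasible for the cost `0`
    have hbv : b ⬝ᵥ v ≤ 0 := by
      simpa using weak_duality A hx hx₀ (c := 0) (add_neg_cancel _) (by simpa using hv)
    have hcu : 0 ≤ c ⬝ᵥ u := by simpa using weak_duality A (b := 0) (by simpa using hAu) hu hs hs₀
    linarith
  have hAu' : A *ᵥ τ⁻¹ • u = b := by rw [mulVec_smul, hAu, inv_smul_smul₀ hτ_pos.ne']
  have hAv' : Aᵀ *ᵥ τ⁻¹ • v + τ⁻¹ • (τ • c - Aᵀ *ᵥ v) = c := by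
    rw [mulVec_smul, smul_sub, inv_smul_smul₀ hτ_pos.ne', add_sub_cancel]
  refine ⟨τ⁻¹ • u, τ⁻¹ • v, _, hAu', smul_nonneg (inv_nonneg.2 hτ) hu, hAv',
    smul_nonneg (inv_nonneg.2 hτ) hv, le_antisymm ?_ ?_, fun j => ?_⟩
  · rw [dotProduct_eq_duality_gap A hAu' hAv', dotProduct_smul, dotProduct_smul, smul_eq_mul,
      smul_eq_mul, ← mul_sub]
    exact mul_nonpos_of_nonneg_of_nonpos (inv_nonneg.2 hτ) (by linarith)
  · exact dotProduct_nonneg_of_nonneg (smul_nonneg (inv_nonneg.2 hτ) hu)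
      (smul_nonneg (inv_nonneg.2 hτ) hv)
  · simpa [← mul_add] using mul_pos (inv_pos.2 hτ_pos) (hpos j)

end LinearProgramming

/-- Complementary slackness and strict complementarity for the primal LP
`min {cᵀx : Ax = b, x ≥ 0}` and its dual `max {bᵀy : Aᵀy + s = c, s ≥ 0}`. -/
theorem complementary_slackness {d n : ℕ}
    (A : Matrix (Fin d) (Fin n) ℝ) (b : Fin d → ℝ) (c : Fin n → ℝ)
    (x s : Fin n → ℝ) (y : Fin d → ℝ)
    (hxP : A.mulVec x = b ∧ ∀ i, 0 ≤ x i)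
    (hsD : Aᵀ.mulVec y + s = c ∧ ∀ i, 0 ≤ s i) :
    (((∀ x' : Fin n → ℝ, A.mulVec x' = b → (∀ i, 0 ≤ x' i) → c ⬝ᵥ x ≤ c ⬝ᵥ x') ∧
      (∀ (y' : Fin d → ℝ) (s' : Fin n → ℝ), Aᵀ.mulVec y' + s' = c → (∀ i, 0 ≤ s' i) →
        b ⬝ᵥ y' ≤ b ⬝ᵥ y)) ↔ x ⬝ᵥ s = 0) ∧
    ((∃ x₀ : Fin n → ℝ, A.mulVec x₀ = b ∧ ∀ i, 0 ≤ x₀ i) →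
     (∃ (y₀ : Fin d → ℝ) (s₀ : Fin n → ℝ), Aᵀ.mulVec y₀ + s₀ = c ∧ ∀ i, 0 ≤ s₀ i) →
     ∃ (xs : Fin n → ℝ) (ys : Fin d → ℝ) (ss : Fin n → ℝ),
       A.mulVec xs = b ∧ (∀ i, 0 ≤ xs i) ∧
       Aᵀ.mulVec ys + ss = c ∧ (∀ i, 0 ≤ ss i) ∧
       xs ⬝ᵥ ss = 0 ∧ ∀ i, 0 < xs i + ss i) := by
  obtain ⟨hAx, hx⟩ := hxP
  obtain ⟨hAy, hs⟩ := hsD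
  have hgap := dotProduct_eq_duality_gap A hAx hAy
  refine ⟨⟨fun ⟨hx_opt, hy_opt⟩ => ?_,
    fun hxs => ⟨fun x' hAx' hx' => ?_, fun y' s' hAy' hs' => ?_⟩⟩, ?_⟩
  · obtain ⟨x', y', s', hAx', hx', hAy', hs', hx's', -⟩ :=
      exists_strictly_complementary A hAx hx hAy hs
    linarith [dotProduct_eq_duality_gap A hAx' hAy', hx_opt x' hAx' hx', hy_opt y' s' hAy' hs',
      weak_duality A hAx hx hAy hs]
  · linarith [weak_duality A hAx' hx' hAy hs]
  · linarith [weak_duality A hAx hx hAy' hs']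
  · rintro ⟨x₀, hAx₀, hx₀⟩ ⟨y₀, s₀, hAy₀, hs₀⟩
    exact exists_strictly_complementary A hAx₀ hx₀ hAy₀ hs₀
end

section
/- Suppose P is nonempty and bounded and its strict interior P° = {x ∈ P : x > 0 componentwise} is nonempty. Then for every strictly positive vector μ ∈ ℝ^n_{>0} there exists a unique pair (x_μ, s_μ) ∈ P° × D° such that x_μ s_μ = μ componentwise. Furthermore, x_μ is the unique minimizer over P of the function f_μ(x) = cᵀx − Σ_{i=1}^n μ_i ln x_i. -/
/-!
The barrier `f_μ` is bounded below on `P°` by `L - μⱼ log xⱼ`, where `L` bounds `(c - μ)ᵀx` below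
on the compact polytope `P` (use `log t ≤ t` in the other coordinates). Hence a sublevel set of
`f_μ` stays a fixed distance away from the boundary of `P`, is compact, and `f_μ` attains its
minimum on `P°`. At a minimiser `x` the derivative `c - μ/x` vanishes on `ker A`, so
`c = Aᵀy + μ/x`: the pair `(x, μ/x)` lies in `P° × D°`. Conversely, whenever `c = Aᵀy + μ/x`, the
tangent-line inequality `log b - log a ≤ (b - a)/a` gives `f_μ(x) < f_μ(x')` for every other
`x' ∈ P°`; applied to two such pairs this yields uniqueness.
-/

open Matrix Filter Topology

variable {ι m : Type*} [Fintype ι]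

theorem Real.log_sub_log_le_div {a b : ℝ} (ha : 0 < a) (hb : 0 < b) :
    Real.log b - Real.log a ≤ (b - a) / a := by
  rw [← Real.log_div hb.ne' ha.ne', sub_div, div_self ha.ne']
  exact Real.log_le_sub_one_of_pos (div_pos hb ha)

theorem Real.log_sub_log_lt_div {a b : ℝ} (ha : 0 < a) (hb : 0 < b) (hab : b ≠ a) :
    Real.log b - Real.log a < (b - a) / a := by
  rw [← Real.log_div hb.ne' ha.ne', sub_div, div_self ha.ne']
  exact Real.log_lt_sub_one_of_pos (div_pos hb ha) (by rwa [Ne, div_eq_one_iff_eq ha.ne'])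

theorem Matrix.exists_transpose_mulVec_eq_of_dotProduct_ker_eq_zero {K : Type*} [Field K]
    [Fintype m] [DecidableEq m] [DecidableEq ι] (A : Matrix m ι K) (w : ι → K)
    (hw : ∀ v, A *ᵥ v = 0 → w ⬝ᵥ v = 0) :
    ∃ y, Aᵀ *ᵥ y = w := by
  set B : (ι → K) →ₗ[K] (m → K) →ₗ[K] K := toLinearMap₂' K Aᵀ
  have hmem : dotProductEquiv K ι w ∈ (LinearMap.ker B).dualAnnihilator := by
    refine (Submodule.mem_dualAnnihilator _).2 fun v hv => hw v (dotProduct_eq_zero _ fun y => ?_)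
    simpa [B, toLinearMap₂'_apply', dotProduct_mulVec, vecMul_transpose]
      using LinearMap.congr_fun hv y
  rw [LinearMap.dualAnnihilator_ker_eq_range_flip] at hmem
  obtain ⟨y, hy⟩ := hmem
  exact ⟨y, funext fun i => by
    simpa [B, toLinearMap₂'_apply'] using LinearMap.congr_fun hy (Pi.single i 1)⟩

theorem Matrix.dotProduct_sub_eq_of_transpose_mulVec_add_eq [Fintype m] {A : Matrix m ι ℝ}
    {y : m → ℝ} {s c x x' : ι → ℝ} (hy : Aᵀ *ᵥ y + s = c) (hx : A *ᵥ x' = A *ᵥ x) :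
    c ⬝ᵥ (x' - x) = s ⬝ᵥ (x' - x) := by
  rw [← hy, add_dotProduct, mulVec_transpose, ← dotProduct_mulVec, mulVec_sub, hx, sub_self,
    dotProduct_zero, zero_add]

def feasibleSet (A : Matrix m ι ℝ) (b : m → ℝ) : Set (ι → ℝ) :=
  {x | A *ᵥ x = b ∧ ∀ i, 0 ≤ x i}

def strictlyFeasibleSet (A : Matrix m ι ℝ) (b : m → ℝ) : Set (ι → ℝ) :=
  {x | A *ᵥ x = b ∧ ∀ i, 0 < x i}

noncomputable def logBarrier (c μ x : ι → ℝ) : ℝ :=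
  c ⬝ᵥ x - ∑ i, μ i * Real.log (x i)

section Optimality

variable {A : Matrix m ι ℝ} {y : m → ℝ} {c μ x x' : ι → ℝ}

theorem logBarrier_lt_of_transpose_mulVec_add_div_eq [Fintype m] (hμ : ∀ i, 0 < μ i)
    (hx : ∀ i, 0 < x i) (hy : Aᵀ *ᵥ y + μ / x = c) (hx' : ∀ i, 0 < x' i)
    (hAx : A *ᵥ x' = A *ᵥ x) (hne : x' ≠ x) :
    logBarrier c μ x < logBarrier c μ x' := by
  have hc := dotProduct_sub_eq_of_transpose_mulVec_add_eq hy hAx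
  obtain ⟨j, hj⟩ := Function.ne_iff.1 hne
  have hlog : ∑ i, μ i * (Real.log (x' i) - Real.log (x i)) < (μ / x) ⬝ᵥ (x' - x) := by
    refine Finset.sum_lt_sum (fun i _ => ?_) ⟨j, Finset.mem_univ j, ?_⟩
    · rw [Pi.div_apply, div_mul_eq_mul_div, mul_div_assoc]
      exact mul_le_mul_of_nonneg_left (Real.log_sub_log_le_div (hx i) (hx' i)) (hμ i).le
    · rw [Pi.div_apply, div_mul_eq_mul_div, mul_div_assoc]
      exact mul_lt_mul_of_pos_left (Real.log_sub_log_lt_div (hx j) (hx' j) hj) (hμ j)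
  simp only [mul_sub, Finset.sum_sub_distrib, dotProduct_sub] at hlog hc
  unfold logBarrier
  linarith

theorem hasDerivAt_logBarrier_add_smul (hx : ∀ i, x i ≠ 0) (v : ι → ℝ) :
    HasDerivAt (fun t : ℝ => logBarrier c μ (x + t • v)) ((c - μ / x) ⬝ᵥ v) 0 := by
  have hline : ∀ i, HasDerivAt (fun t : ℝ => x i + t * v i) (v i) 0 := fun i => by
    simpa using ((hasDerivAt_id (0 : ℝ)).mul_const (v i)).const_add (x i)
  have hlin : HasDerivAt (fun t : ℝ => c ⬝ᵥ (x + t • v)) (c ⬝ᵥ v) 0 := by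
    simpa [dotProduct_add, dotProduct_smul] using
      ((hasDerivAt_id (0 : ℝ)).mul_const (c ⬝ᵥ v)).const_add (c ⬝ᵥ x)
  have hlog : HasDerivAt (fun t : ℝ => ∑ i, μ i * Real.log (x i + t * v i))
      (∑ i, μ i * (v i / x i)) 0 :=
    HasDerivAt.fun_sum fun i _ => by
      simpa using ((hline i).log (by simpa using hx i)).const_mul (μ i)
  have hval : (c - μ / x) ⬝ᵥ v = c ⬝ᵥ v - ∑ i, μ i * (v i / x i) := by
    rw [sub_dotProduct]
    simp only [dotProduct, Pi.div_apply, div_mul_eq_mul_div, mul_div_assoc]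
  rw [hval]
  refine (hlin.sub hlog).congr_of_eventuallyEq (Eventually.of_forall fun t => ?_)
  simp [logBarrier]

theorem dotProduct_sub_div_eq_zero_of_isMinOn {b : m → ℝ} (hx : x ∈ strictlyFeasibleSet A b)
    (hmin : IsMinOn (logBarrier c μ) (strictlyFeasibleSet A b) x) {v : ι → ℝ}
    (hv : A *ᵥ v = 0) : (c - μ / x) ⬝ᵥ v = 0 := by
  have hpos : ∀ᶠ t in 𝓝 (0 : ℝ), ∀ i, 0 < (x + t • v) i := by
    have hopen : IsOpen {z : ι → ℝ | ∀ i, 0 < z i} := by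
      rw [Set.ofPred_forall]
      exact isOpen_iInter_of_finite fun i => isOpen_lt continuous_const (continuous_apply i)
    refine (Continuous.tendsto (by fun_prop) 0).eventually (hopen.mem_nhds ?_)
    simpa using hx.2
  have hloc : IsLocalMin (fun t : ℝ => logBarrier c μ (x + t • v)) 0 := by
    filter_upwards [hpos] with t ht
    have hAx : A *ᵥ (x + t • v) = b := by
      rw [mulVec_add, mulVec_smul, hv, smul_zero, add_zero, hx.1]
    simpa using isMinOn_iff.1 hmin (x + t • v) ⟨hAx, ht⟩
  exact hloc.hasDerivAt_eq_zero (hasDerivAt_logBarrier_add_smul (fun i => (hx.2 i).ne') v)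

theorem exists_transpose_mulVec_add_div_eq_of_isMinOn [Fintype m] {b : m → ℝ}
    (hx : x ∈ strictlyFeasibleSet A b)
    (hmin : IsMinOn (logBarrier c μ) (strictlyFeasibleSet A b) x) :
    ∃ y, Aᵀ *ᵥ y + μ / x = c := by
  classical
  obtain ⟨y, hy⟩ := exists_transpose_mulVec_eq_of_dotProduct_ker_eq_zero A (c - μ / x)
    fun v hv => dotProduct_sub_div_eq_zero_of_isMinOn hx hmin hv
  exact ⟨y, by rw [hy, sub_add_cancel]⟩

end Optimality

section Existence

variable {A : Matrix m ι ℝ} {b : m → ℝ} {c μ x : ι → ℝ}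

theorem isClosed_setOf_mulVec_eq_and_le (A : Matrix m ι ℝ) (b : m → ℝ) (l : ι → ℝ) :
    IsClosed {x | A *ᵥ x = b ∧ ∀ i, l i ≤ x i} := by
  have hle : IsClosed {x : ι → ℝ | ∀ i, l i ≤ x i} := by
    rw [Set.ofPred_forall]
    exact isClosed_iInter fun i => isClosed_le continuous_const (continuous_apply i)
  exact (isClosed_eq (continuous_const.matrix_mulVec continuous_id) continuous_const).inter hle

theorem continuousOn_logBarrier : ContinuousOn (logBarrier c μ) {x | ∀ i, x i ≠ 0} := by
  unfold logBarrier
  fun_prop (disch := aesop)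

theorem sub_mul_log_le_logBarrier (hμ : ∀ i, 0 ≤ μ i) (hx : ∀ i, 0 < x i) (j : ι) :
    (c - μ) ⬝ᵥ x - μ j * Real.log (x j) ≤ logBarrier c μ x := by
  have hterm : ∀ i, 0 ≤ μ i * (x i - Real.log (x i)) := fun i =>
    mul_nonneg (hμ i) (by linarith [Real.log_le_sub_one_of_pos (hx i)])
  have hj := Finset.single_le_sum (fun i _ => hterm i) (Finset.mem_univ j)
  simp only [mul_sub, Finset.sum_sub_distrib] at hj
  rw [logBarrier, sub_dotProduct]
  simp only [dotProduct]
  nlinarith [mul_nonneg (hμ j) (hx j).le]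

theorem exp_le_of_logBarrier_le (hμ : ∀ i, 0 < μ i) (hx : ∀ i, 0 < x i) {L B : ℝ}
    (hL : L ≤ (c - μ) ⬝ᵥ x) (hB : logBarrier c μ x ≤ B) (j : ι) :
    Real.exp ((L - B) / μ j) ≤ x j := by
  rw [← Real.le_log_iff_exp_le (hx j), div_le_iff₀ (hμ j), mul_comm]
  linarith [sub_mul_log_le_logBarrier (c := c) (fun i => (hμ i).le) hx j]

theorem exists_isMinOn_logBarrier (hbdd : Bornology.IsBounded (feasibleSet A b))
    (hint : (strictlyFeasibleSet A b).Nonempty) (hμ : ∀ i, 0 < μ i) :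
    ∃ x ∈ strictlyFeasibleSet A b, IsMinOn (logBarrier c μ) (strictlyFeasibleSet A b) x := by
  obtain ⟨x₀, hx₀⟩ := hint
  have hP : IsCompact (feasibleSet A b) :=
    Metric.isCompact_of_isClosed_isBounded (isClosed_setOf_mulVec_eq_and_le A b 0) hbdd
  obtain ⟨L, hL⟩ := hP.bddBelow_image (f := fun x => (c - μ) ⬝ᵥ x) (by fun_prop)
  set δ : ι → ℝ := fun j => Real.exp ((L - logBarrier c μ x₀) / μ j)
  set K := {x | A *ᵥ x = b ∧ ∀ i, δ i ≤ x i}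
  have hKpos : ∀ x ∈ K, ∀ i, 0 < x i := fun x hx i => (Real.exp_pos _).trans_le (hx.2 i)
  have hsub : ∀ x ∈ strictlyFeasibleSet A b, logBarrier c μ x ≤ logBarrier c μ x₀ → x ∈ K :=
    fun x hx hle => ⟨hx.1, exp_le_of_logBarrier_le hμ hx.2
      (hL ⟨x, ⟨hx.1, fun i => (hx.2 i).le⟩, rfl⟩) hle⟩
  have hK : IsCompact K := Metric.isCompact_of_isClosed_isBounded
    (isClosed_setOf_mulVec_eq_and_le A b δ)
    (hbdd.subset fun x hx => ⟨hx.1, fun i => (hKpos x hx i).le⟩)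
  have hx₀K : x₀ ∈ K := hsub x₀ hx₀ le_rfl
  obtain ⟨z, hzK, hzmin⟩ := hK.exists_isMinOn ⟨x₀, hx₀K⟩
    (continuousOn_logBarrier.mono fun x hx i => (hKpos x hx i).ne')
  refine ⟨z, ⟨hzK.1, hKpos z hzK⟩, isMinOn_iff.2 fun x hx => ?_⟩
  rcases le_total (logBarrier c μ x) (logBarrier c μ x₀) with hle | hle
  · exact isMinOn_iff.1 hzmin x (hsub x hx hle)
  · exact (isMinOn_iff.1 hzmin x₀ hx₀K).trans hle

end Existence

theorem primal_dual_representation_general {d n : ℕ}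
    (A : Matrix (Fin d) (Fin n) ℝ) (b : Fin d → ℝ) (c : Fin n → ℝ)
    (hbdd : Bornology.IsBounded {x : Fin n → ℝ | A.mulVec x = b ∧ ∀ i, 0 ≤ x i})
    (hint : ∃ x : Fin n → ℝ, A.mulVec x = b ∧ ∀ i, 0 < x i)
    (μ : Fin n → ℝ) (hμ : ∀ i, 0 < μ i) :
    ∃ p : (Fin n → ℝ) × (Fin n → ℝ),
      ((A.mulVec p.1 = b ∧ (∀ i, 0 < p.1 i)) ∧
        ((∃ y : Fin d → ℝ, Aᵀ.mulVec y + p.2 = c) ∧ (∀ i, 0 < p.2 i)) ∧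
        (∀ i, p.1 i * p.2 i = μ i)) ∧
      (∀ q : (Fin n → ℝ) × (Fin n → ℝ),
        ((A.mulVec q.1 = b ∧ (∀ i, 0 < q.1 i)) ∧
          ((∃ y : Fin d → ℝ, Aᵀ.mulVec y + q.2 = c) ∧ (∀ i, 0 < q.2 i)) ∧
          (∀ i, q.1 i * q.2 i = μ i)) → q = p) ∧
      (∀ x' : Fin n → ℝ, A.mulVec x' = b → (∀ i, 0 < x' i) → x' ≠ p.1 →
        c ⬝ᵥ p.1 - ∑ i, μ i * Real.log (p.1 i) <
          c ⬝ᵥ x' - ∑ i, μ i * Real.log (x' i)) := by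
  obtain ⟨x, hx, hmin⟩ := exists_isMinOn_logBarrier (c := c) hbdd hint hμ
  obtain ⟨y, hy⟩ := exists_transpose_mulVec_add_div_eq_of_isMinOn hx hmin
  have hstrict : ∀ x' ∈ strictlyFeasibleSet A b, x' ≠ x → logBarrier c μ x < logBarrier c μ x' :=
    fun x' hx' hne => logBarrier_lt_of_transpose_mulVec_add_div_eq hμ hx.2 hy hx'.2
      (hx'.1.trans hx.1.symm) hne
  refine ⟨(x, μ / x), ⟨hx, ⟨⟨y, hy⟩, fun i => div_pos (hμ i) (hx.2 i)⟩,
    fun i => mul_div_cancel₀ _ (hx.2 i).ne'⟩, ?_,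
    fun x' hb hpos hne => hstrict x' ⟨hb, hpos⟩ hne⟩
  rintro ⟨x', s'⟩ ⟨hx', ⟨⟨y', hy'⟩, -⟩, hxs'⟩
  obtain rfl : s' = μ / x' :=
    funext fun i => eq_div_of_mul_eq (hx'.2 i).ne' ((mul_comm _ _).trans (hxs' i))
  obtain rfl : x' = x := by
    by_contra hne
    exact (hstrict x' hx' hne).not_gt (logBarrier_lt_of_transpose_mulVec_add_div_eq hμ hx'.2 hy'
      hx.2 (hx.1.trans hx'.1.symm) (Ne.symm hne))
  rfl

/-- Quadrant representation of primal-dual: if `P` is nonempty and bounded and has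
nonempty strict interior, then for every `μ > 0` there is a unique pair
`(x_μ, s_μ) ∈ P° × D°` with `x_μ s_μ = μ` componentwise; moreover `x_μ` is the unique
minimizer of `f_μ(x) = cᵀx − Σ μ_i ln x_i` over the strictly positive feasible points. -/
theorem primal_dual_representation {d n : ℕ}
    (A : Matrix (Fin d) (Fin n) ℝ) (b : Fin d → ℝ) (c : Fin n → ℝ)
    (hne : ∃ x : Fin n → ℝ, A.mulVec x = b ∧ ∀ i, 0 ≤ x i)
    (hbdd : Bornology.IsBounded {x : Fin n → ℝ | A.mulVec x = b ∧ ∀ i, 0 ≤ x i})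
    (hint : ∃ x : Fin n → ℝ, A.mulVec x = b ∧ ∀ i, 0 < x i)
    (μ : Fin n → ℝ) (hμ : ∀ i, 0 < μ i) :
    ∃ p : (Fin n → ℝ) × (Fin n → ℝ),
      ((A.mulVec p.1 = b ∧ (∀ i, 0 < p.1 i)) ∧
        ((∃ y : Fin d → ℝ, Aᵀ.mulVec y + p.2 = c) ∧ (∀ i, 0 < p.2 i)) ∧
        (∀ i, p.1 i * p.2 i = μ i)) ∧
      (∀ q : (Fin n → ℝ) × (Fin n → ℝ),
        ((A.mulVec q.1 = b ∧ (∀ i, 0 < q.1 i)) ∧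
          ((∃ y : Fin d → ℝ, Aᵀ.mulVec y + q.2 = c) ∧ (∀ i, 0 < q.2 i)) ∧
          (∀ i, q.1 i * q.2 i = μ i)) → q = p) ∧
      (∀ x' : Fin n → ℝ, A.mulVec x' = b → (∀ i, 0 < x' i) → x' ≠ p.1 →
        c ⬝ᵥ p.1 - ∑ i, μ i * Real.log (p.1 i) <
          c ⬝ᵥ x' - ∑ i, μ i * Real.log (x' i)) :=
  primal_dual_representation_general A b c hbdd hint μ hμ
end

section
/- Suppose A has full row rank and (x, s) ∈ P° × D°. Then for any δ_μ ∈ ℝ^n, the linear system S δ_x + X δ_s = δ_μ, A δ_x = 0, Aᵀ δ_y + δ_s = 0 has a unique solution (δ_x, δ_s, δ_y), and it is given by X⁻¹δ_x = (I − P_proj)(δ_μ/μ) and S⁻¹δ_s = P_proj(δ_μ/μ), where μ = xs componentwise. -/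
open Matrix

/-- The projection-like matrix `P = S⁻¹Aᵀ(A S⁻¹ X Aᵀ)⁻¹ A X`. -/
noncomputable def Pproj {d n : ℕ} (A : Matrix (Fin d) (Fin n) ℝ) (x s : Fin n → ℝ) :
    Matrix (Fin n) (Fin n) ℝ :=
  (Matrix.diagonal s)⁻¹ * Aᵀ * (A * (Matrix.diagonal s)⁻¹ * Matrix.diagonal x * Aᵀ)⁻¹ *
    A * Matrix.diagonal x

/-!
In the scaled unknowns `u = X⁻¹δx`, `v = S⁻¹δs`, dividing the first equation by `μ = xs` turns
the system into `u + v = δμ/μ` with `u ∈ ker (A X)` and `v = S⁻¹Aᵀ(-δy) ∈ range (S⁻¹Aᵀ)`.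
For matrices `B`, `C` with `C B` invertible, `B (C B)⁻¹ C` is the projection onto `range B`
along `ker C`, so such a decomposition exists and is unique. Here `B = S⁻¹Aᵀ`, `C = A X`, and
`C B = A (S⁻¹X) Aᵀ` is positive definite because `A` has full row rank; then
`B (C B)⁻¹ C = P_proj`.
-/

namespace Matrix

variable {m n K : Type*} [Fintype m] [Fintype n]

theorem vecMul_injective_of_rank_eq_card [Field K] {A : Matrix m n K}
    (hA : A.rank = Fintype.card m) : Function.Injective A.vecMul := by
  rw [vecMul_injective_iff, linearIndependent_iff_card_eq_finrank_span]
  exact hA.symm.trans A.rank_eq_finrank_span_row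

theorem isUnit_mul_diagonal_mul_transpose [Field K] [PartialOrder K] [StarRing K]
    [StarOrderedRing K] [TrivialStar K] [DecidableEq m] [DecidableEq n]
    {A : Matrix m n K} (hA : A.rank = Fintype.card m) {w : n → K} (hw : ∀ i, 0 < w i) :
    IsUnit (A * diagonal w * Aᵀ) := by
  simpa [conjTranspose_eq_transpose_of_trivial] using
    ((PosDef.diagonal hw).mul_mul_conjTranspose_same (vecMul_injective_of_rank_eq_card hA)).isUnit

theorem inv_diagonal_of_ne_zero [DecidableEq n] [Field K] {v : n → K} (hv : ∀ i, v i ≠ 0) :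
    (diagonal v)⁻¹ = diagonal v⁻¹ := by
  refine inv_eq_left_inv ?_
  rw [diagonal_mul_diagonal, ← diagonal_one]
  exact congrArg diagonal (funext fun i => inv_mul_cancel₀ (hv i))

theorem add_eq_and_mulVec_eq_zero_and_eq_mulVec_iff [CommRing K] [DecidableEq m] [DecidableEq n]
    {B : Matrix n m K} {C : Matrix m n K} (hCB : IsUnit (C * B)) {r u v : n → K} {y : m → K} :
    u + v = r ∧ C *ᵥ u = 0 ∧ v = B *ᵥ y ↔
      y = (C * B)⁻¹ *ᵥ C *ᵥ r ∧ v = (B * (C * B)⁻¹ * C) *ᵥ r ∧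
        u = (1 - B * (C * B)⁻¹ * C) *ᵥ r := by
  have hdet := (isUnit_iff_isUnit_det _).1 hCB
  constructor
  · rintro ⟨hr, hu, rfl⟩
    have hy : y = (C * B)⁻¹ *ᵥ C *ᵥ r := by
      rw [← hr, mulVec_add, hu, zero_add, mulVec_mulVec y C, mulVec_mulVec,
        nonsing_inv_mul _ hdet, one_mulVec]
    subst hy
    refine ⟨rfl, by simp only [mulVec_mulVec, Matrix.mul_assoc], ?_⟩
    rw [sub_mulVec, one_mulVec, eq_sub_iff_add_eq]
    simpa only [mulVec_mulVec, Matrix.mul_assoc] using hr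
  · rintro ⟨rfl, rfl, rfl⟩
    refine ⟨by rw [sub_mulVec, one_mulVec, sub_add_cancel], ?_,
      by simp only [mulVec_mulVec, Matrix.mul_assoc]⟩
    rw [mulVec_mulVec, Matrix.mul_sub, Matrix.mul_one, ← Matrix.mul_assoc, ← Matrix.mul_assoc,
      mul_nonsing_inv _ hdet, Matrix.one_mul, sub_self, zero_mulVec]

end Matrix

theorem Pi.div_eq_iff {ι K : Type*} [GroupWithZero K] {a b c : ι → K} (hb : ∀ i, b i ≠ 0) :
    a / b = c ↔ a = c * b := by
  simp only [funext_iff, Pi.div_apply, Pi.mul_apply]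
  exact forall_congr' fun i => _root_.div_eq_iff (hb i)

theorem newton_system_iff {m n K : Type*} [Fintype m] [Fintype n] [DecidableEq n] [Field K]
    (A : Matrix m n K) {x s : n → K} (hx : ∀ i, x i ≠ 0) (hs : ∀ i, s i ≠ 0)
    {δx δs δμ : n → K} {δy : m → K} :
    diagonal s *ᵥ δx + diagonal x *ᵥ δs = δμ ∧ A *ᵥ δx = 0 ∧ Aᵀ *ᵥ δy + δs = 0 ↔
      δx / x + δs / s = δμ / (x * s) ∧ (A * diagonal x) *ᵥ (δx / x) = 0 ∧
        δs / s = (diagonal s⁻¹ * Aᵀ) *ᵥ (-δy) := by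
  refine and_congr ?_ (and_congr ?_ ?_)
  · simp only [funext_iff, Pi.add_apply, Pi.div_apply, Pi.mul_apply, mulVec_diagonal]
    refine forall_congr' fun i => ?_
    rw [div_add_div _ _ (hx i) (hs i), div_left_inj' (mul_ne_zero (hx i) (hs i))]
    ring_nf
  · rw [← mulVec_mulVec]
    congr! 2
    ext i
    rw [mulVec_diagonal, Pi.div_apply, mul_div_cancel₀ _ (hx i)]
  · have hcancel : ∀ w, (diagonal s⁻¹ *ᵥ w) * s = w := fun w => funext fun i => by
      rw [Pi.mul_apply, mulVec_diagonal, Pi.inv_apply, mul_comm, mul_inv_cancel_left₀ (hs i)]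
    rw [Pi.div_eq_iff hs, ← mulVec_mulVec, hcancel, mulVec_neg, add_eq_zero_iff_eq_neg']

/-- The Newton step system `S δx + X δs = δμ`, `A δx = 0`, `Aᵀ δy + δs = 0` has a unique
solution, given by `X⁻¹ δx = (I − P)(δμ/μ)` and `S⁻¹ δs = P (δμ/μ)` where `μ = xs`. -/
theorem newton_step {d n : ℕ}
    (A : Matrix (Fin d) (Fin n) ℝ) (b : Fin d → ℝ) (c : Fin n → ℝ)
    (hA : A.rank = d)
    (x s : Fin n → ℝ)
    (hx : A.mulVec x = b ∧ ∀ i, 0 < x i)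
    (hs : (∃ y : Fin d → ℝ, Aᵀ.mulVec y + s = c) ∧ ∀ i, 0 < s i)
    (δμ : Fin n → ℝ) :
    (∃! sol : (Fin n → ℝ) × (Fin n → ℝ) × (Fin d → ℝ),
      (Matrix.diagonal s).mulVec sol.1 + (Matrix.diagonal x).mulVec sol.2.1 = δμ ∧
      A.mulVec sol.1 = 0 ∧ Aᵀ.mulVec sol.2.2 + sol.2.1 = 0) ∧
    (∀ (δx δs : Fin n → ℝ) (δy : Fin d → ℝ),
      (Matrix.diagonal s).mulVec δx + (Matrix.diagonal x).mulVec δs = δμ →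
      A.mulVec δx = 0 → Aᵀ.mulVec δy + δs = 0 →
      (fun i => δx i / x i) =
        ((1 : Matrix (Fin n) (Fin n) ℝ) - Pproj A x s).mulVec
          (fun i => δμ i / (x i * s i)) ∧
      (fun i => δs i / s i) = (Pproj A x s).mulVec (fun i => δμ i / (x i * s i))) := by
  have hx0 : ∀ i, x i ≠ 0 := fun i => (hx.2 i).ne'
  have hs0 : ∀ i, s i ≠ 0 := fun i => (hs.2 i).ne'
  set B := diagonal s⁻¹ * Aᵀ
  set C := A * diagonal x
  set r : Fin n → ℝ := δμ / (x * s)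
  have hCB : C * B = A * diagonal (s⁻¹ * x) * Aᵀ := by
    simp only [B, C, Matrix.mul_assoc, ← Matrix.mul_assoc (diagonal x), diagonal_mul_diagonal,
      mul_comm (x _), ← Pi.mul_def]
  have hP : Pproj A x s = B * (C * B)⁻¹ * C := by
    rw [hCB, Pproj, inv_diagonal_of_ne_zero hs0, Matrix.mul_assoc A, diagonal_mul_diagonal]
    simp only [B, C, Matrix.mul_assoc, ← Pi.mul_def]
  have hunit : IsUnit (C * B) := hCB ▸ isUnit_mul_diagonal_mul_transpose
    (by rwa [Fintype.card_fin]) fun i => mul_pos (inv_pos.2 (hs.2 i)) (hx.2 i)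
  have key : ∀ δx δs δy, diagonal s *ᵥ δx + diagonal x *ᵥ δs = δμ ∧ A *ᵥ δx = 0 ∧
      Aᵀ *ᵥ δy + δs = 0 ↔
        -δy = (C * B)⁻¹ *ᵥ C *ᵥ r ∧ δs / s = Pproj A x s *ᵥ r ∧
          δx / x = (1 - Pproj A x s) *ᵥ r := by
    intro δx δs δy
    rw [hP]
    exact (newton_system_iff A hx0 hs0).trans (add_eq_and_mulVec_eq_zero_and_eq_mulVec_iff hunit)
  refine ⟨⟨(((1 - Pproj A x s) *ᵥ r) * x, (Pproj A x s *ᵥ r) * s, -((C * B)⁻¹ *ᵥ C *ᵥ r)),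
    (key _ _ _).2 ⟨neg_neg _, (Pi.div_eq_iff hs0).2 rfl, (Pi.div_eq_iff hx0).2 rfl⟩, ?_⟩,
    fun δx δs δy h₁ h₂ h₃ => ?_⟩
  · rintro ⟨δx, δs, δy⟩ hsol
    obtain ⟨hy, hs', hx'⟩ := (key δx δs δy).1 hsol
    rw [Pi.div_eq_iff hs0] at hs'
    rw [Pi.div_eq_iff hx0] at hx'
    rw [hx', hs', ← hy, neg_neg]
  · obtain ⟨-, hs', hx'⟩ := (key δx δs δy).1 ⟨h₁, h₂, h₃⟩
    exact ⟨hx', hs'⟩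
end

section
/- Suppose A has full row rank and x, s ∈ ℝ^n are strictly positive componentwise. Then the matrix P_proj satisfies P_proj² = P_proj, and for every v ∈ ℝ^n one has ‖P_proj v‖_μ ≤ ‖v‖_μ and ‖(I − P_proj)v‖_μ ≤ ‖v‖_μ, where μ = xs componentwise. -/
open Matrix

lemma dot_self_nonneg {n : ℕ} (v : Fin n → ℝ) : 0 ≤ v ⬝ᵥ v :=
  Finset.sum_nonneg fun i _ => mul_self_nonneg (v i)

lemma proj_dot {n : ℕ} (Q : Matrix (Fin n) (Fin n) ℝ) (hQQ : Q * Q = Q) (hQT : Qᵀ = Q)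
    (u : Fin n → ℝ) : (Q *ᵥ u) ⬝ᵥ (Q *ᵥ u) = u ⬝ᵥ (Q *ᵥ u) := by
  rw [Matrix.dotProduct_mulVec, ← Matrix.mulVec_transpose, hQT, Matrix.mulVec_mulVec, hQQ,
    dotProduct_comm]

lemma proj_contract {n : ℕ} (Q : Matrix (Fin n) (Fin n) ℝ) (hQQ : Q * Q = Q) (hQT : Qᵀ = Q)
    (u : Fin n → ℝ) : (Q *ᵥ u) ⬝ᵥ (Q *ᵥ u) ≤ u ⬝ᵥ u := by
  set R : Matrix (Fin n) (Fin n) ℝ := 1 - Q with hR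
  have hRQ : R * R = R := by
    rw [hR, sub_mul, mul_sub, mul_sub, one_mul, one_mul, mul_one, hQQ]
    abel
  have hRT : Rᵀ = R := by rw [hR, transpose_sub, transpose_one, hQT]
  have hsum : u ⬝ᵥ u = u ⬝ᵥ (Q *ᵥ u) + u ⬝ᵥ (R *ᵥ u) := by
    rw [← dotProduct_add]
    congr 1
    rw [← add_mulVec, hR]
    simp
  rw [proj_dot Q hQQ hQT u, hsum]
  have h2 : 0 ≤ u ⬝ᵥ (R *ᵥ u) := by
    rw [← proj_dot R hRQ hRT u]; exact dot_self_nonneg _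
  linarith

/-- The weighted norm `‖u‖_w = (Σ w_i u_i²)^{1/2}`. -/
noncomputable def wnorm {n : ℕ} (w u : Fin n → ℝ) : ℝ :=
  Real.sqrt (∑ i, w i * (u i) ^ 2)

/-- `P` is a projection matrix and both `P` and `I − P` are contractions in the
`μ`-weighted norm, where `μ = xs` componentwise. -/
theorem projection_property {d n : ℕ}
    (A : Matrix (Fin d) (Fin n) ℝ) (hA : A.rank = d)
    (x s : Fin n → ℝ) (hx : ∀ i, 0 < x i) (hs : ∀ i, 0 < s i) :
    Pproj A x s * Pproj A x s = Pproj A x s ∧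
    ∀ v : Fin n → ℝ,
      wnorm (fun i => x i * s i) ((Pproj A x s).mulVec v) ≤
        wnorm (fun i => x i * s i) v ∧
      wnorm (fun i => x i * s i)
          (((1 : Matrix (Fin n) (Fin n) ℝ) - Pproj A x s).mulVec v) ≤
        wnorm (fun i => x i * s i) v := by
  -- weights
  set w : Fin n → ℝ := fun i => Real.sqrt (x i * s i) with hwdef
  set dd : Fin n → ℝ := fun i => Real.sqrt (x i / s i) with hdddef
  have hw : ∀ i, 0 < w i := fun i => Real.sqrt_pos.mpr (mul_pos (hx i) (hs i))
  have hdd : ∀ i, 0 < dd i := fun i => Real.sqrt_pos.mpr (div_pos (hx i) (hs i))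
  -- scalar identities
  have h3 : ∀ i, dd i * w i = x i := by
    intro i
    rw [hdddef, hwdef]
    rw [← Real.sqrt_mul (div_nonneg (hx i).le (hs i).le)]
    rw [show x i / s i * (x i * s i) = (x i) ^ 2 by field_simp [(hs i).ne']; try ring]
    exact Real.sqrt_sq (hx i).le
  have hds : ∀ i, dd i * s i = w i := by
    intro i
    rw [hdddef, hwdef]
    rw [show s i = Real.sqrt ((s i) ^ 2) from (Real.sqrt_sq (hs i).le).symm]
    rw [← Real.sqrt_mul (div_nonneg (hx i).le (hs i).le)]
    congr 1
    field_simp [(hs i).ne']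
    try ring
  have h1 : ∀ i, w i * (s i)⁻¹ = dd i := fun i => by
    rw [← hds i, mul_inv_cancel_right₀ (hs i).ne']
  have h4 : ∀ i, (s i)⁻¹ * x i = dd i * dd i := fun i => by
    rw [hdddef]
    simp only
    rw [Real.mul_self_sqrt (div_nonneg (hx i).le (hs i).le)]
    rw [inv_mul_eq_div]
  have h5 : ∀ i, w i * w i = x i * s i := fun i =>
    Real.mul_self_sqrt (mul_pos (hx i) (hs i)).le
  -- diagonal matrix identities
  have hSinv : (Matrix.diagonal s)⁻¹ = Matrix.diagonal (fun i => (s i)⁻¹) := by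
    apply Matrix.inv_eq_right_inv
    rw [Matrix.diagonal_mul_diagonal, ← Matrix.diagonal_one]
    exact congrArg Matrix.diagonal (funext fun i => mul_inv_cancel₀ (hs i).ne')
  have hWinv : (Matrix.diagonal w)⁻¹ = Matrix.diagonal (fun i => (w i)⁻¹) := by
    apply Matrix.inv_eq_right_inv
    rw [Matrix.diagonal_mul_diagonal, ← Matrix.diagonal_one]
    exact congrArg Matrix.diagonal (funext fun i => mul_inv_cancel₀ (hw i).ne')
  have hWWinv : Matrix.diagonal w * (Matrix.diagonal w)⁻¹ = 1 := by
    rw [hWinv, Matrix.diagonal_mul_diagonal, ← Matrix.diagonal_one]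
    exact congrArg Matrix.diagonal (funext fun i => mul_inv_cancel₀ (hw i).ne')
  have hWinvW : (Matrix.diagonal w)⁻¹ * Matrix.diagonal w = 1 := by
    rw [hWinv, Matrix.diagonal_mul_diagonal, ← Matrix.diagonal_one]
    exact congrArg Matrix.diagonal (funext fun i => inv_mul_cancel₀ (hw i).ne')
  have hWS : Matrix.diagonal w * Matrix.diagonal (fun i => (s i)⁻¹) = Matrix.diagonal dd := by
    rw [Matrix.diagonal_mul_diagonal]
    exact congrArg Matrix.diagonal (funext h1)
  have hDW : Matrix.diagonal dd * Matrix.diagonal w = Matrix.diagonal x := by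
    rw [Matrix.diagonal_mul_diagonal]
    exact congrArg Matrix.diagonal (funext h3)
  have hSX : Matrix.diagonal (fun i => (s i)⁻¹) * Matrix.diagonal x
      = Matrix.diagonal dd * Matrix.diagonal dd := by
    rw [Matrix.diagonal_mul_diagonal, Matrix.diagonal_mul_diagonal]
    exact congrArg Matrix.diagonal (funext h4)
  -- names
  set B : Matrix (Fin d) (Fin n) ℝ := A * Matrix.diagonal dd with hBdef
  set M : Matrix (Fin d) (Fin d) ℝ :=
    A * (Matrix.diagonal s)⁻¹ * Matrix.diagonal x * Aᵀ with hMdef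
  have hM : M = B * Bᵀ := by
    rw [hMdef, hBdef, Matrix.transpose_mul, Matrix.diagonal_transpose, hSinv]
    rw [Matrix.mul_assoc A, hSX]
    rw [← Matrix.mul_assoc A]
    exact Matrix.mul_assoc _ _ _
  -- invertibility of M
  have hDdet : IsUnit (Matrix.diagonal dd).det := by
    rw [Matrix.det_diagonal]
    exact isUnit_iff_ne_zero.mpr (Finset.prod_pos (fun i _ => hdd i)).ne'
  have hrank : M.rank = Fintype.card (Fin d) := by
    rw [hM, hBdef, Matrix.rank_self_mul_transpose,
      Matrix.rank_mul_eq_left_of_isUnit_det _ A hDdet, hA, Fintype.card_fin]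
  have hMu : IsUnit M := by
    rw [← Matrix.mulVec_surjective_iff_isUnit]
    have hrange : LinearMap.range M.mulVecLin = ⊤ := by
      apply Submodule.eq_top_of_finrank_eq
      rw [← Matrix.rank, hrank, Module.finrank_pi]
    intro v
    obtain ⟨u, hu⟩ := LinearMap.range_eq_top.mp hrange v
    exact ⟨u, hu⟩
  have hMdet : IsUnit M.det := (Matrix.isUnit_iff_isUnit_det M).mp hMu
  have hMinvM : M⁻¹ * M = 1 := Matrix.nonsing_inv_mul M hMdet
  have hMMinv : M * M⁻¹ = 1 := Matrix.mul_nonsing_inv M hMdet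
  have hMT : Mᵀ = M := by
    rw [hM, Matrix.transpose_mul, Matrix.transpose_transpose]
  have hMinvT : (M⁻¹)ᵀ = M⁻¹ := by
    rw [Matrix.transpose_nonsing_inv, hMT]
  -- the symmetric projection
  set Q : Matrix (Fin n) (Fin n) ℝ := Bᵀ * M⁻¹ * B with hQdef
  have hQQ : Q * Q = Q := by
    rw [hQdef]
    simp only [Matrix.mul_assoc]
    rw [← Matrix.mul_assoc B Bᵀ, ← hM, ← Matrix.mul_assoc M M⁻¹, hMMinv, Matrix.one_mul]
  have hQT : Qᵀ = Q := by
    rw [hQdef]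
    simp only [Matrix.transpose_mul, Matrix.transpose_transpose, hMinvT, Matrix.mul_assoc]
  -- key conjugation identity
  have hWP : Matrix.diagonal w * Pproj A x s = Q * Matrix.diagonal w := by
    rw [Pproj, ← hMdef, hSinv, hQdef, hBdef, Matrix.transpose_mul, Matrix.diagonal_transpose]
    simp only [Matrix.mul_assoc]
    rw [← Matrix.mul_assoc (Matrix.diagonal w) (Matrix.diagonal fun i => (s i)⁻¹), hWS]
    rw [hDW]
  -- P is idempotent
  have hP : Pproj A x s = (Matrix.diagonal w)⁻¹ * (Q * Matrix.diagonal w) := by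
    rw [← hWP, ← Matrix.mul_assoc, hWinvW, Matrix.one_mul]
  have hPP : Pproj A x s * Pproj A x s = Pproj A x s := by
    rw [hP]
    simp only [Matrix.mul_assoc]
    rw [← Matrix.mul_assoc (Matrix.diagonal w) (Matrix.diagonal w)⁻¹, hWWinv, Matrix.one_mul,
      ← Matrix.mul_assoc Q Q, hQQ]
  refine ⟨hPP, fun v => ?_⟩
  -- norms
  have hnorm : ∀ z : Fin n → ℝ,
      wnorm (fun i => x i * s i) z
        = Real.sqrt ((Matrix.diagonal w *ᵥ z) ⬝ᵥ (Matrix.diagonal w *ᵥ z)) := by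
    intro z
    rw [wnorm]
    congr 1
    rw [dotProduct]
    refine Finset.sum_congr rfl fun i _ => ?_
    rw [Matrix.mulVec_diagonal, ← h5 i]
    ring
  have hWPv : Matrix.diagonal w *ᵥ ((Pproj A x s) *ᵥ v) = Q *ᵥ (Matrix.diagonal w *ᵥ v) := by
    rw [Matrix.mulVec_mulVec, Matrix.mulVec_mulVec, hWP]
  have hWRv : Matrix.diagonal w *ᵥ (((1 : Matrix (Fin n) (Fin n) ℝ) - Pproj A x s) *ᵥ v)
      = ((1 : Matrix (Fin n) (Fin n) ℝ) - Q) *ᵥ (Matrix.diagonal w *ᵥ v) := by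
    rw [Matrix.mulVec_mulVec, Matrix.mulVec_mulVec]
    rw [Matrix.mul_sub, Matrix.sub_mul, mul_one, Matrix.one_mul, hWP]
  have hRQ : ((1 : Matrix (Fin n) (Fin n) ℝ) - Q) * ((1 : Matrix (Fin n) (Fin n) ℝ) - Q)
      = (1 : Matrix (Fin n) (Fin n) ℝ) - Q := by
    rw [sub_mul, mul_sub, mul_sub, one_mul, one_mul, mul_one, hQQ]
    abel
  have hRT : ((1 : Matrix (Fin n) (Fin n) ℝ) - Q)ᵀ = (1 : Matrix (Fin n) (Fin n) ℝ) - Q := by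
    rw [Matrix.transpose_sub, Matrix.transpose_one, hQT]
  constructor
  · rw [hnorm, hnorm, hWPv]
    exact Real.sqrt_le_sqrt (proj_contract Q hQQ hQT (Matrix.diagonal w *ᵥ v))
  · rw [hnorm, hnorm, hWRv]
    exact Real.sqrt_le_sqrt (proj_contract _ hRQ hRT (Matrix.diagonal w *ᵥ v))
end

section
/- Suppose A has full row rank, (x, s) ∈ P° × D°, δ_μ ∈ ℝ^n, and let δ_x = X(I − P_proj)(δ_μ/μ) and δ_s = S P_proj(δ_μ/μ) with μ = xs. Then ‖X⁻¹δ_x‖_∞² ≤ (1/min_i μ_i)·‖δ_μ/μ‖_μ² and ‖S⁻¹δ_s‖_∞² ≤ (1/min_i μ_i)·‖δ_μ/μ‖_μ². In particular, if ‖δ_μ/μ‖_μ² < min_i μ_i, then (x + δ_x, s + δ_s) ∈ P° × D°. -/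
open Matrix

lemma aux_isUnit {d n : ℕ} (A : Matrix (Fin d) (Fin n) ℝ) (hA : A.rank = d)
    (g : Fin n → ℝ) (hg : ∀ i, 0 < g i) :
    IsUnit (A * Matrix.diagonal g * Aᵀ) := by
  have hT : Function.Injective Aᵀ.mulVecLin := by
    rw [← LinearMap.ker_eq_bot]
    have h1 := LinearMap.finrank_range_add_finrank_ker (Aᵀ.mulVecLin)
    have h2 : Aᵀ.rank = d := by rw [Matrix.rank_transpose, hA]
    unfold Matrix.rank at h2
    rw [h2, Module.finrank_fin_fun] at h1
    have h3 : Module.finrank ℝ (LinearMap.ker Aᵀ.mulVecLin) = 0 := by omega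
    exact Submodule.finrank_eq_zero.mp h3
  rw [← Matrix.mulVec_injective_iff_isUnit]
  have hker : ∀ z, (A * Matrix.diagonal g * Aᵀ).mulVec z = 0 → z = 0 := by
    intro z hz
    have h0 : z ⬝ᵥ (A * Matrix.diagonal g * Aᵀ).mulVec z = 0 := by rw [hz]; simp
    set w := Aᵀ.mulVec z with hw
    have hexp : z ⬝ᵥ (A * Matrix.diagonal g * Aᵀ).mulVec z = ∑ i, g i * w i ^ 2 := by
      rw [← Matrix.mulVec_mulVec, ← Matrix.mulVec_mulVec, Matrix.dotProduct_mulVec,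
        ← Matrix.mulVec_transpose, ← hw]
      simp only [dotProduct, Matrix.mulVec_diagonal]
      exact Finset.sum_congr rfl fun i _ => by ring
    rw [hexp] at h0
    have hforall := (Finset.sum_eq_zero_iff_of_nonneg
      (fun i _ => mul_nonneg (hg i).le (sq_nonneg _))).mp h0
    have hw0 : w = 0 := by
      funext i
      have hi := hforall i (Finset.mem_univ i)
      have : w i ^ 2 = 0 := by
        rcases mul_eq_zero.mp hi with h | h
        · exact absurd h (hg i).ne'
        · exact h
      simpa using pow_eq_zero_iff (n := 2) (by norm_num) |>.mp this
    refine hT (show Aᵀ.mulVecLin z = Aᵀ.mulVecLin 0 from ?_)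
    rw [Matrix.mulVecLin_apply, Matrix.mulVecLin_apply, ← hw, hw0]
    simp
  intro a b hab
  have : (A * Matrix.diagonal g * Aᵀ).mulVec (a - b) = 0 := by
    rw [Matrix.mulVec_sub, hab, sub_self]
  exact sub_eq_zero.mp (hker _ this)

lemma key_ids {d n : ℕ} (A : Matrix (Fin d) (Fin n) ℝ)
    (Dx Si Ds Dμ : Matrix (Fin n) (Fin n) ℝ) (N : Matrix (Fin d) (Fin d) ℝ)
    (hcomm : Dx * Si = Si * Dx)
    (hDsSi : Ds * Si = 1)
    (hSiDs : Si * Ds = 1)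
    (hDμ : Dμ = Dx * Ds) (hDμ' : Dμ = Ds * Dx)
    (hxT : Dxᵀ = Dx) (hsT : Siᵀ = Si)
    (hMN : (A * Si * Dx * Aᵀ) * N = 1)
    (hNT : Nᵀ = N) :
    A * Dx * (Si * Aᵀ * N * A * Dx) = A * Dx ∧
    (Si * Aᵀ * N * A * Dx) * (Si * Aᵀ * N * A * Dx) = (Si * Aᵀ * N * A * Dx) ∧
    (Si * Aᵀ * N * A * Dx)ᵀ * Dμ = Dμ * (Si * Aᵀ * N * A * Dx) ∧
    Ds * (Si * Aᵀ * N * A * Dx) = Aᵀ * (N * (A * Dx)) := by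
  have h1 : A * Dx * (Si * Aᵀ * N * A * Dx) = A * Dx := by
    simp only [← Matrix.mul_assoc]
    rw [Matrix.mul_assoc A Dx Si, hcomm, ← Matrix.mul_assoc, hMN, Matrix.one_mul]
  have h2 : (Si * Aᵀ * N * A * Dx) * (Si * Aᵀ * N * A * Dx) = (Si * Aᵀ * N * A * Dx) := by
    calc (Si * Aᵀ * N * A * Dx) * (Si * Aᵀ * N * A * Dx)
        = Si * Aᵀ * N * (A * Dx * (Si * Aᵀ * N * A * Dx)) := by
          simp only [Matrix.mul_assoc]
      _ = Si * Aᵀ * N * (A * Dx) := by rw [h1]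
      _ = Si * Aᵀ * N * A * Dx := by simp only [Matrix.mul_assoc]
  have hPT : (Si * Aᵀ * N * A * Dx)ᵀ = Dx * Aᵀ * N * A * Si := by
    simp only [Matrix.transpose_mul, Matrix.transpose_transpose, hxT, hsT, hNT,
      Matrix.mul_assoc]
  have h3 : (Si * Aᵀ * N * A * Dx)ᵀ * Dμ = Dμ * (Si * Aᵀ * N * A * Dx) := by
    calc (Si * Aᵀ * N * A * Dx)ᵀ * Dμ
        = Dx * Aᵀ * N * A * ((Si * Ds) * Dx) := by
          rw [hPT, hDμ']; simp only [Matrix.mul_assoc]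
      _ = Dx * Aᵀ * N * A * Dx := by rw [hSiDs, Matrix.one_mul]
      _ = Dx * ((Ds * Si) * (Aᵀ * (N * (A * Dx)))) := by
          rw [hDsSi, Matrix.one_mul]; simp only [Matrix.mul_assoc]
      _ = Dμ * (Si * Aᵀ * N * A * Dx) := by rw [hDμ]; simp only [Matrix.mul_assoc]
  have h4 : Ds * (Si * Aᵀ * N * A * Dx) = Aᵀ * (N * (A * Dx)) := by
    simp only [← Matrix.mul_assoc]
    rw [hDsSi, Matrix.one_mul]
  exact ⟨h1, h2, h3, h4⟩

/-- The ℓ∞ norm. -/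
noncomputable def linf {n : ℕ} (u : Fin n → ℝ) : ℝ := ⨆ i, |u i|

/-- Step size bounds: `‖X⁻¹δx‖_∞² ≤ ‖δμ/μ‖_μ²/min_i μ_i`, similarly for `s`; and if
`‖δμ/μ‖_μ² < min_i μ_i` then `(x + δx, s + δs) ∈ P° × D°`. -/
theorem step_size {d n : ℕ}
    (A : Matrix (Fin d) (Fin n) ℝ) (b : Fin d → ℝ) (c : Fin n → ℝ)
    (hA : A.rank = d)
    (x s : Fin n → ℝ)
    (hx : A.mulVec x = b ∧ ∀ i, 0 < x i)
    (hs : (∃ y : Fin d → ℝ, Aᵀ.mulVec y + s = c) ∧ ∀ i, 0 < s i)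
    (δμ : Fin n → ℝ)
    (δx δs : Fin n → ℝ)
    (hδx : δx = (Matrix.diagonal x).mulVec
      (((1 : Matrix (Fin n) (Fin n) ℝ) - Pproj A x s).mulVec
        (fun i => δμ i / (x i * s i))))
    (hδs : δs = (Matrix.diagonal s).mulVec
      ((Pproj A x s).mulVec (fun i => δμ i / (x i * s i)))) :
    (linf (fun i => δx i / x i)) ^ 2 ≤
      (1 / ⨅ i, x i * s i) *
        (wnorm (fun i => x i * s i) (fun i => δμ i / (x i * s i))) ^ 2 ∧
    (linf (fun i => δs i / s i)) ^ 2 ≤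
      (1 / ⨅ i, x i * s i) *
        (wnorm (fun i => x i * s i) (fun i => δμ i / (x i * s i))) ^ 2 ∧
    ((wnorm (fun i => x i * s i) (fun i => δμ i / (x i * s i))) ^ 2 <
        (⨅ i, x i * s i) →
      (A.mulVec (x + δx) = b ∧ ∀ i, 0 < x i + δx i) ∧
      ((∃ y : Fin d → ℝ, Aᵀ.mulVec y + (s + δs) = c) ∧ ∀ i, 0 < s i + δs i)) := by
  obtain ⟨hAx, hxpos⟩ := hx
  obtain ⟨⟨y, hy⟩, hspos⟩ := hs
  rcases isEmpty_or_nonempty (Fin n) with hE | hNE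
  · have hli : ∀ u : Fin n → ℝ, linf u = 0 := fun u => Real.iSup_of_isEmpty _
    have hwn : wnorm (fun i => x i * s i) (fun i => δμ i / (x i * s i)) = 0 := by
      simp [wnorm, Finset.univ_eq_empty]
    have hinf : (⨅ i, x i * s i) = 0 := Real.iInf_of_isEmpty _
    refine ⟨?_, ?_, ?_⟩
    · rw [hli, hwn, hinf]; norm_num
    · rw [hli, hwn, hinf]; norm_num
    · intro h; rw [hwn, hinf] at h; norm_num at h
  -- main case
  set v : Fin n → ℝ := fun i => δμ i / (x i * s i) with hv
  set Dx := Matrix.diagonal x with hDx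
  set Ds := Matrix.diagonal s with hDs
  set Si := Matrix.diagonal (fun i : Fin n => (s i)⁻¹) with hSi
  set Dμ := Matrix.diagonal (fun i : Fin n => x i * s i) with hDμdef
  have hxne : ∀ i, x i ≠ 0 := fun i => (hxpos i).ne'
  have hsne : ∀ i, s i ≠ 0 := fun i => (hspos i).ne'
  have hDsi : Ds⁻¹ = Si := by
    refine Matrix.inv_eq_right_inv ?_
    rw [hDs, hSi, Matrix.diagonal_mul_diagonal]
    have e : (fun i => s i * (s i)⁻¹) = (1 : Fin n → ℝ) :=
      funext fun i => mul_inv_cancel₀ (hsne i)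
    rw [e]; exact Matrix.diagonal_one
  have hcomm : Dx * Si = Si * Dx := by
    rw [hDx, hSi, Matrix.diagonal_mul_diagonal, Matrix.diagonal_mul_diagonal]
    exact congrArg Matrix.diagonal (funext fun i => mul_comm _ _)
  have hDsSi : Ds * Si = 1 := by
    rw [hDs, hSi, Matrix.diagonal_mul_diagonal]
    have e : (fun i => s i * (s i)⁻¹) = (1 : Fin n → ℝ) :=
      funext fun i => mul_inv_cancel₀ (hsne i)
    rw [e]; exact Matrix.diagonal_one
  have hSiDs : Si * Ds = 1 := by
    rw [hDs, hSi, Matrix.diagonal_mul_diagonal]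
    have e : (fun i => (s i)⁻¹ * s i) = (1 : Fin n → ℝ) :=
      funext fun i => inv_mul_cancel₀ (hsne i)
    rw [e]; exact Matrix.diagonal_one
  have hDμx : Dμ = Dx * Ds := by
    rw [hDμdef, hDx, hDs, Matrix.diagonal_mul_diagonal]
  have hDμs : Dμ = Ds * Dx := by
    rw [hDμdef, hDx, hDs, Matrix.diagonal_mul_diagonal]
    exact congrArg Matrix.diagonal (funext fun i => mul_comm _ _)
  have hxT : Dxᵀ = Dx := by rw [hDx, Matrix.diagonal_transpose]
  have hsT : Siᵀ = Si := by rw [hSi, Matrix.diagonal_transpose]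
  -- the matrix M and its inverse N
  set M := A * Ds⁻¹ * Dx * Aᵀ with hMdef
  set N := M⁻¹ with hNdef
  have hMform : M = A * Matrix.diagonal (fun i => (s i)⁻¹ * x i) * Aᵀ := by
    rw [hMdef, hDsi, hSi, hDx, Matrix.mul_assoc A, Matrix.diagonal_mul_diagonal]
  have hMunit : IsUnit M := by
    rw [hMform]
    exact aux_isUnit A hA _ (fun i => mul_pos (inv_pos.mpr (hspos i)) (hxpos i))
  have hMdet : IsUnit M.det := (Matrix.isUnit_iff_isUnit_det M).mp hMunit
  have hMN : (A * Si * Dx * Aᵀ) * N = 1 := by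
    rw [hNdef, ← hDsi, ← hMdef]
    exact Matrix.mul_nonsing_inv M hMdet
  have hMT : Mᵀ = M := by
    rw [hMdef, hDsi]
    simp only [Matrix.transpose_mul, Matrix.transpose_transpose, hxT, hsT]
    calc A * (Dx * (Si * Aᵀ)) = A * ((Dx * Si) * Aᵀ) := by simp only [Matrix.mul_assoc]
      _ = A * ((Si * Dx) * Aᵀ) := by rw [hcomm]
      _ = A * Si * Dx * Aᵀ := by simp only [Matrix.mul_assoc]
  have hNT : Nᵀ = N := by
    rw [hNdef, Matrix.transpose_nonsing_inv, hMT]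
  obtain ⟨h1, h2, h3, h4⟩ := key_ids A Dx Si Ds Dμ N hcomm hDsSi hSiDs hDμx hDμs hxT hsT hMN hNT
  have hPdef : Pproj A x s = Si * Aᵀ * N * A * Dx := by
    unfold Pproj
    rw [← hDs, ← hDx, hDsi, hNdef, hMdef, hDsi]
  -- p and q
  set p : Fin n → ℝ := (Pproj A x s).mulVec v with hp
  set q : Fin n → ℝ := ((1 : Matrix (Fin n) (Fin n) ℝ) - Pproj A x s).mulVec v with hq
  have hqv : ∀ i, q i = v i - p i := by
    intro i
    rw [hq, hp, Matrix.sub_mulVec, Matrix.one_mulVec]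
    simp
  have hδxq : ∀ i, δx i = x i * q i := by
    intro i
    rw [hδx, hDx, Matrix.mulVec_diagonal]
  have hδsp : ∀ i, δs i = s i * p i := by
    intro i
    rw [hδs, hDs, Matrix.mulVec_diagonal]
  have hδxdiv : (fun i => δx i / x i) = q := by
    funext i; rw [hδxq i, mul_div_cancel_left₀ _ (hxne i)]
  have hδsdiv : (fun i => δs i / s i) = p := by
    funext i; rw [hδsp i, mul_div_cancel_left₀ _ (hsne i)]
  -- orthogonality
  have hP1P : Pproj A x s * ((1 : Matrix (Fin n) (Fin n) ℝ) - Pproj A x s) = 0 := by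
    rw [Matrix.mul_sub, Matrix.mul_one, hPdef, h2, sub_self]
  have hPq : (Pproj A x s).mulVec q = 0 := by
    rw [hq, Matrix.mulVec_mulVec, hP1P, Matrix.zero_mulVec]
  have h1' : A * Dx * Pproj A x s = A * Dx := by rw [hPdef]; exact h1
  have h3' : (Pproj A x s)ᵀ * Dμ = Dμ * Pproj A x s := by rw [hPdef]; exact h3
  have h4' : Ds * Pproj A x s = Aᵀ * (N * (A * Dx)) := by rw [hPdef]; exact h4
  have horth : ∑ i, (x i * s i) * (p i * q i) = 0 := by
    have e1 : ∑ i, (x i * s i) * (p i * q i) = p ⬝ᵥ (Dμ.mulVec q) := by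
      simp only [dotProduct, hDμdef, Matrix.mulVec_diagonal]
      exact Finset.sum_congr rfl fun i _ => by ring
    have e2 : p ⬝ᵥ (Dμ.mulVec q) = v ⬝ᵥ (((Pproj A x s)ᵀ * Dμ).mulVec q) := by
      rw [← Matrix.mulVec_mulVec, Matrix.dotProduct_mulVec v, Matrix.vecMul_transpose, hp]
    rw [e1, e2, h3', ← Matrix.mulVec_mulVec, hPq, Matrix.mulVec_zero, dotProduct_zero]
  have hqvsum : ∀ i, v i = p i + q i := fun i => by rw [hqv i]; ring
  -- sum decomposition
  have hsum : ∑ i, (x i * s i) * v i ^ 2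
      = (∑ i, (x i * s i) * p i ^ 2) + (∑ i, (x i * s i) * q i ^ 2) := by
    have e : ∀ i, (x i * s i) * v i ^ 2
        = ((x i * s i) * p i ^ 2 + (x i * s i) * q i ^ 2) + 2 * ((x i * s i) * (p i * q i)) :=
      fun i => by rw [hqvsum i]; ring
    calc ∑ i, (x i * s i) * v i ^ 2
        = ∑ i, (((x i * s i) * p i ^ 2 + (x i * s i) * q i ^ 2)
            + 2 * ((x i * s i) * (p i * q i))) := Finset.sum_congr rfl fun i _ => e i
      _ = (∑ i, ((x i * s i) * p i ^ 2 + (x i * s i) * q i ^ 2))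
            + 2 * ∑ i, (x i * s i) * (p i * q i) := by
          rw [Finset.sum_add_distrib, Finset.mul_sum]
      _ = (∑ i, (x i * s i) * p i ^ 2) + (∑ i, (x i * s i) * q i ^ 2) := by
          rw [horth, mul_zero, add_zero, Finset.sum_add_distrib]
  set S : ℝ := ∑ i, (x i * s i) * v i ^ 2 with hSdef
  have hS0 : 0 ≤ S := Finset.sum_nonneg fun i _ =>
    mul_nonneg (mul_pos (hxpos i) (hspos i)).le (sq_nonneg _)
  have hwn2 : (wnorm (fun i => x i * s i) (fun i => δμ i / (x i * s i))) ^ 2 = S := by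
    rw [wnorm, Real.sq_sqrt hS0]
  -- infimum facts
  set m : ℝ := ⨅ i, x i * s i with hm
  have hmle : ∀ i, m ≤ x i * s i := fun i =>
    ciInf_le (Set.Finite.bddBelow (Set.finite_range _)) i
  have hmpos : 0 < m := by
    obtain ⟨j, hj⟩ := Finite.exists_min (fun i => x i * s i)
    exact lt_of_lt_of_le (mul_pos (hxpos j) (hspos j)) (le_ciInf hj)
  have hsump : ∑ i, (x i * s i) * p i ^ 2 ≤ S := by
    rw [hsum]
    have : 0 ≤ ∑ i, (x i * s i) * q i ^ 2 := Finset.sum_nonneg fun i _ =>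
      mul_nonneg (mul_pos (hxpos i) (hspos i)).le (sq_nonneg _)
    linarith
  have hsumq : ∑ i, (x i * s i) * q i ^ 2 ≤ S := by
    rw [hsum]
    have : 0 ≤ ∑ i, (x i * s i) * p i ^ 2 := Finset.sum_nonneg fun i _ =>
      mul_nonneg (mul_pos (hxpos i) (hspos i)).le (sq_nonneg _)
    linarith
  -- componentwise bound
  have hcomp : ∀ (u : Fin n → ℝ), (∑ i, (x i * s i) * u i ^ 2 ≤ S) →
      ∀ i, (x i * s i) * u i ^ 2 ≤ S := by
    intro u hu i
    refine le_trans ?_ hu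
    exact Finset.single_le_sum (f := fun i => (x i * s i) * u i ^ 2)
      (fun i _ => mul_nonneg (mul_pos (hxpos i) (hspos i)).le (sq_nonneg _))
      (Finset.mem_univ i)
  have hbound : ∀ (u : Fin n → ℝ), (∑ i, (x i * s i) * u i ^ 2 ≤ S) →
      (linf u) ^ 2 ≤ (1 / m) * S := by
    intro u hu
    have hC0 : 0 ≤ (1 / m) * S := mul_nonneg (by positivity) hS0
    have hub : ∀ i, |u i| ≤ Real.sqrt ((1 / m) * S) := by
      intro i
      have h1i := hcomp u hu i
      have hμpos : 0 < x i * s i := mul_pos (hxpos i) (hspos i)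
      have h2i : u i ^ 2 ≤ S / (x i * s i) := by
        rw [le_div_iff₀ hμpos]; linarith [h1i]
      have h3i : S / (x i * s i) ≤ S / m :=
        div_le_div_of_nonneg_left hS0 hmpos (hmle i)
      have heq : (1 / m) * S = S / m := by ring
      have h4i : u i ^ 2 ≤ (1 / m) * S := by rw [heq]; exact h2i.trans h3i
      exact Real.abs_le_sqrt h4i
    have hbdd : BddAbove (Set.range fun i => |u i|) :=
      Set.Finite.bddAbove (Set.finite_range _)
    have hle : linf u ≤ Real.sqrt ((1 / m) * S) := ciSup_le hub
    have h0 : 0 ≤ linf u := by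
      obtain ⟨i0⟩ := hNE
      exact le_trans (abs_nonneg (u i0)) (le_ciSup hbdd i0)
    calc (linf u) ^ 2 ≤ Real.sqrt ((1 / m) * S) ^ 2 := pow_le_pow_left₀ h0 hle 2
      _ = (1 / m) * S := Real.sq_sqrt hC0
  refine ⟨?_, ?_, ?_⟩
  · rw [hδxdiv, hwn2]; exact hbound q hsumq
  · rw [hδsdiv, hwn2]; exact hbound p hsump
  · intro hlt
    rw [hwn2] at hlt
    have habs : ∀ (u : Fin n → ℝ), (∑ i, (x i * s i) * u i ^ 2 ≤ S) → ∀ i, |u i| < 1 := by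
      intro u hu i
      have h1i := hcomp u hu i
      have hμpos : 0 < x i * s i := mul_pos (hxpos i) (hspos i)
      have h2 : u i ^ 2 < 1 := by nlinarith [hmle i]
      exact (sq_lt_one_iff_abs_lt_one _).mp h2
    have hAδx : A.mulVec δx = 0 := by
      rw [hδx, hq, Matrix.mulVec_mulVec, Matrix.mulVec_mulVec]
      have hz : A * Dx * ((1 : Matrix (Fin n) (Fin n) ℝ) - Pproj A x s) = 0 := by
        rw [Matrix.mul_sub, Matrix.mul_one, h1', sub_self]
      rw [hz, Matrix.zero_mulVec]
    have hδsform : δs = Aᵀ.mulVec (((N * (A * Dx))).mulVec v) := by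
      rw [hδs, hp, Matrix.mulVec_mulVec, h4', ← Matrix.mulVec_mulVec]
    refine ⟨⟨?_, ?_⟩, ⟨⟨y - ((N * (A * Dx))).mulVec v, ?_⟩, ?_⟩⟩
    · rw [Matrix.mulVec_add, hAx, hAδx, add_zero]
    · intro i
      have h1 : -1 < q i := (abs_lt.mp (habs q hsumq i)).1
      have h3 : 0 < x i * (1 + q i) := mul_pos (hxpos i) (by linarith)
      have h4 : x i * (1 + q i) = x i + x i * q i := by ring
      rw [hδxq i]; linarith
    · rw [Matrix.mulVec_sub, hδsform, ← hy]
      abel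
    · intro i
      have h1 : -1 < p i := (abs_lt.mp (habs p hsump i)).1
      have h3 : 0 < s i * (1 + p i) := mul_pos (hspos i) (by linarith)
      have h4 : s i * (1 + p i) = s i + s i * p i := by ring
      rw [hδsp i]; linarith
end

section
/- For any n ≥ 1, λ > 0, and r ∈ ℝ^n, the gradient of the potential satisfies ‖∇Φ(r)‖₂ ≥ (λ/√n)·(Φ(r) − n), where ∇Φ(r)_i = λ sinh(λ r_i). -/
lemma cosh_sub_one_le_abs_sinh (x : ℝ) : Real.cosh x - 1 ≤ |Real.sinh x| := by
  have h1 : 1 ≤ Real.cosh x := Real.one_le_cosh x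
  have h2 : |Real.sinh x| ^ 2 = Real.cosh x ^ 2 - 1 := by
    rw [sq_abs, Real.sinh_sq]
  have h3 : 0 ≤ |Real.sinh x| := abs_nonneg _
  nlinarith

/-- For the potential `Φ(r) = Σ cosh(λ r_i)` with gradient `∇Φ(r)_i = λ sinh(λ r_i)`,
one has `‖∇Φ(r)‖₂ ≥ (λ/√n)(Φ(r) − n)`. -/
theorem grad_potential_lower_bound {n : ℕ} (hn : 1 ≤ n) (lam : ℝ) (hlam : 0 < lam)
    (r : Fin n → ℝ) :
    Real.sqrt (∑ i, (lam * Real.sinh (lam * r i)) ^ 2) ≥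
      lam / Real.sqrt n * ((∑ i, Real.cosh (lam * r i)) - n) := by
  set a : Fin n → ℝ := fun i => lam * |Real.sinh (lam * r i)| with ha
  have hsum : (∑ i, (lam * Real.sinh (lam * r i)) ^ 2) = ∑ i, a i ^ 2 := by
    apply Finset.sum_congr rfl
    intro i _
    rw [ha]
    simp [mul_pow, sq_abs]
  have hCS : (∑ i, a i) ^ 2 ≤ n * ∑ i, a i ^ 2 := by
    have := sq_sum_le_card_mul_sum_sq (s := Finset.univ) (f := a)
    simpa using this
  have hn0 : (0:ℝ) < n := by exact_mod_cast hn
  have hsq : Real.sqrt n * Real.sqrt (∑ i, a i ^ 2) ≥ ∑ i, a i := by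
    have h1 : Real.sqrt ((∑ i, a i)^2) ≤ Real.sqrt (n * ∑ i, a i ^ 2) :=
      Real.sqrt_le_sqrt hCS
    have h2 : 0 ≤ ∑ i, a i := Finset.sum_nonneg fun i _ => by positivity
    rwa [Real.sqrt_sq h2, Real.sqrt_mul hn0.le] at h1
  have hlow : lam * ((∑ i, Real.cosh (lam * r i)) - n) ≤ ∑ i, a i := by
    have : (∑ i, Real.cosh (lam * r i)) - n = ∑ i, (Real.cosh (lam * r i) - 1) := by
      rw [Finset.sum_sub_distrib]
      simp
    rw [this, Finset.mul_sum]
    apply Finset.sum_le_sum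
    intro i _
    exact mul_le_mul_of_nonneg_left (cosh_sub_one_le_abs_sinh _) hlam.le
  rw [hsum, ge_iff_le, div_mul_eq_mul_div, div_le_iff₀ (Real.sqrt_pos.mpr hn0)]
  calc lam * ((∑ i, Real.cosh (lam * r i)) - n) ≤ ∑ i, a i := hlow
    _ ≤ Real.sqrt (∑ i, a i ^ 2) * Real.sqrt n := by rw [mul_comm]; exact hsq
end

section
/- Let n ≥ 1, λ > 0, and r, δ ∈ ℝ^n with Φ(r) ≥ 4n and ‖δ‖_∞ ≤ 1/(5λ). Then ‖∇Φ(r + δ) − ∇Φ(r)‖₂ ≤ (1/3)·‖∇Φ(r)‖₂. -/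
/-!
The increment `sinh (t + d) - sinh t = sinh t (cosh d - 1) + cosh t sinh d` is bounded in absolute
value by `(exp |d| - 1) cosh t ≤ cosh t / 4` for `|d| ≤ 1/5`, so the squared norm of the gradient change
is at most `λ² Σ cosh² (λ rᵢ) / 16 = λ² (Σ sinh² (λ rᵢ) + n) / 16`. The hypothesis `Φ(r) ≥ 4n`
makes the additive `n` negligible: `cosh² ≥ 8 cosh - 16` summed gives `Σ sinh² ≥ 15 n`, whence the
squared change is at most `λ² Σ sinh² / 15 ≤ ‖∇Φ(r)‖₂² / 9`.
-/

open Real Finset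

lemma Real.abs_sinh_le_cosh (t : ℝ) : |sinh t| ≤ cosh t :=
  (abs_sinh t).trans_le ((sinh_lt_cosh _).le.trans_eq (cosh_abs t))

lemma Real.abs_sinh_add_sub_sinh_le (t d : ℝ) :
    |sinh (t + d) - sinh t| ≤ (exp |d| - 1) * cosh t := by
  have hcosh : 0 ≤ cosh d - 1 := by linarith [one_le_cosh d]
  calc |sinh (t + d) - sinh t| = |sinh t * (cosh d - 1) + cosh t * sinh d| := by
        rw [sinh_add]; ring_nf
    _ ≤ |sinh t| * (cosh d - 1) + cosh t * |sinh d| := by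
        refine (abs_add_le _ _).trans_eq ?_
        rw [abs_mul, abs_mul, abs_of_nonneg hcosh, abs_of_pos (cosh_pos t)]
    _ ≤ cosh t * (cosh d - 1) + cosh t * |sinh d| := by
        gcongr; exact abs_sinh_le_cosh t
    _ = (exp |d| - 1) * cosh t := by
        rw [← cosh_add_sinh, cosh_abs, ← abs_sinh]; ring

lemma Real.abs_sinh_add_sub_sinh_le_cosh_div_four {t d : ℝ} (hd : |d| ≤ 1 / 5) :
    |sinh (t + d) - sinh t| ≤ cosh t / 4 := by
  have hexp : exp |d| ≤ 5 / 4 :=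
    calc exp |d| ≤ exp (1 / 5) := exp_le_exp.mpr hd
      _ ≤ 1 / (1 - 1 / 5) := exp_bound_div_one_sub_of_interval (by norm_num) (by norm_num)
      _ = 5 / 4 := by norm_num
  calc |sinh (t + d) - sinh t| ≤ (exp |d| - 1) * cosh t := abs_sinh_add_sub_sinh_le t d
    _ ≤ (5 / 4 - 1) * cosh t := by gcongr
    _ = cosh t / 4 := by ring

lemma sq_mul_sinh_add_sub_le {a x y : ℝ} (hy : |a * y| ≤ 1 / 5) :
    (a * sinh (a * (x + y)) - a * sinh (a * x)) ^ 2 ≤ a ^ 2 * (sinh (a * x) ^ 2 + 1) / 16 := by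
  have h := abs_sinh_add_sub_sinh_le_cosh_div_four (t := a * x) hy
  have hsq : (sinh (a * x + a * y) - sinh (a * x)) ^ 2 ≤ (cosh (a * x) / 4) ^ 2 :=
    sq_le_sq' (abs_le.mp h).1 (abs_le.mp h).2
  calc (a * sinh (a * (x + y)) - a * sinh (a * x)) ^ 2
      = a ^ 2 * (sinh (a * x + a * y) - sinh (a * x)) ^ 2 := by ring_nf
    _ ≤ a ^ 2 * (cosh (a * x) / 4) ^ 2 := by gcongr
    _ = a ^ 2 * (sinh (a * x) ^ 2 + 1) / 16 := by rw [div_pow, cosh_sq]; ring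

lemma abs_mul_le_of_abs_le_div {a x c : ℝ} (hc : 0 ≤ c) (h : |x| ≤ c / a) : |a * x| ≤ c := by
  rcases lt_trichotomy a 0 with ha | rfl | ha
  · have hx : x = 0 := abs_nonpos_iff.mp (h.trans (div_nonpos_of_nonneg_of_nonpos hc ha.le))
    simpa [hx] using hc
  · simpa using hc
  · rw [abs_mul, abs_of_pos ha]
    exact (le_div_iff₀' ha).mp h

lemma fifteen_mul_card_le_sum_sinh_sq {ι : Type*} (s : Finset ι) (f : ι → ℝ)
    (h : 4 * (#s : ℝ) ≤ ∑ i ∈ s, cosh (f i)) :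
    15 * (#s : ℝ) ≤ ∑ i ∈ s, sinh (f i) ^ 2 := by
  have hpoint : ∀ i ∈ s, 8 * cosh (f i) - 17 ≤ sinh (f i) ^ 2 := fun i _ => by
    nlinarith [cosh_sq (f i), sq_nonneg (cosh (f i) - 4)]
  have := sum_le_sum hpoint
  rw [sum_sub_distrib, ← mul_sum, sum_const, nsmul_eq_mul] at this
  linarith

theorem grad_potential_stability_general {n : ℕ} (lam : ℝ)
    (r δ : Fin n → ℝ)
    (hΦ : (4 * n : ℝ) ≤ ∑ i, Real.cosh (lam * r i))
    (hδ : (⨆ i, |δ i|) ≤ 1 / (5 * lam)) :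
    Real.sqrt (∑ i,
        (lam * Real.sinh (lam * (r i + δ i)) - lam * Real.sinh (lam * r i)) ^ 2) ≤
      (1 / 3) * Real.sqrt (∑ i, (lam * Real.sinh (lam * r i)) ^ 2) := by
  have hδi (i : Fin n) : |lam * δ i| ≤ 1 / 5 :=
    abs_mul_le_of_abs_le_div (by norm_num)
      ((le_ciSup (Set.finite_range _).bddAbove i).trans (hδ.trans_eq (by ring)))
  have hsinh := fifteen_mul_card_le_sum_sinh_sq univ (fun i => lam * r i) (by simpa using hΦ)
  rw [card_univ, Fintype.card_fin] at hsinh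
  have hsq : ∑ i, (lam * sinh (lam * (r i + δ i)) - lam * sinh (lam * r i)) ^ 2 ≤
      (1 / 3) ^ 2 * ∑ i, (lam * sinh (lam * r i)) ^ 2 :=
    calc _ ≤ ∑ i, lam ^ 2 * (sinh (lam * r i) ^ 2 + 1) / 16 :=
          sum_le_sum fun i _ => sq_mul_sinh_add_sub_le (hδi i)
      _ = lam ^ 2 * (∑ i, sinh (lam * r i) ^ 2 + n) / 16 := by
          simp [← sum_div, ← mul_sum, sum_add_distrib]
      _ ≤ (1 / 3) ^ 2 * (lam ^ 2 * ∑ i, sinh (lam * r i) ^ 2) := by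
          have hlam2 := sq_nonneg lam
          nlinarith [mul_le_mul_of_nonneg_left hsinh hlam2]
      _ = (1 / 3) ^ 2 * ∑ i, (lam * sinh (lam * r i)) ^ 2 := by simp [mul_sum, mul_pow]
  calc _ ≤ sqrt ((1 / 3) ^ 2 * ∑ i, (lam * sinh (lam * r i)) ^ 2) := sqrt_le_sqrt hsq
    _ = 1 / 3 * sqrt (∑ i, (lam * sinh (lam * r i)) ^ 2) := by
        rw [sqrt_mul (by positivity), sqrt_sq (by norm_num)]

/-- For the potential `Φ(r) = Σ cosh(λ r_i)` with gradient `∇Φ(r)_i = λ sinh(λ r_i)`: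
if `Φ(r) ≥ 4n` and `‖δ‖_∞ ≤ 1/(5λ)`, then
`‖∇Φ(r + δ) − ∇Φ(r)‖₂ ≤ ‖∇Φ(r)‖₂/3`. -/
theorem grad_potential_stability {n : ℕ} (hn : 1 ≤ n) (lam : ℝ) (hlam : 0 < lam)
    (r δ : Fin n → ℝ)
    (hΦ : (4 * n : ℝ) ≤ ∑ i, Real.cosh (lam * r i))
    (hδ : (⨆ i, |δ i|) ≤ 1 / (5 * lam)) :
    Real.sqrt (∑ i,
        (lam * Real.sinh (lam * (r i + δ i)) - lam * Real.sinh (lam * r i)) ^ 2) ≤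
      (1 / 3) * Real.sqrt (∑ i, (lam * Real.sinh (lam * r i)) ^ 2) :=
  grad_potential_stability_general lam r δ hΦ hδ
end

section
/- Let n ≥ 1, λ = 16·log(40n), t > 0. Suppose A has full row rank, (x, s) ∈ P° × D°, and Φ((xs − t·1)/t) ≤ 16n. Let x̄, s̄ ∈ ℝ^n_{>0} satisfy ‖ln x̄ − ln x‖_∞ ≤ 1/48 and ‖ln s̄ − ln s‖_∞ ≤ 1/48 (componentwise logarithms), let δ̄_μ ∈ ℝ^n with ‖δ̄_μ‖₂ ≤ t/(32λ), and let (δ_x, δ_s, δ_y) solve S̄ δ_x + X̄ δ_s = δ̄_μ, A δ_x = 0, Aᵀ δ_y + δ_s = 0, where X̄ = Diag(x̄), S̄ = Diag(s̄). Then ‖xs − t·1‖_∞ ≤ t/16, ‖δ_x/x‖₂ ≤ 1/(16λ), and ‖δ_s/s‖₂ ≤ 1/(16λ). -/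
/-!
The potential bound forces every `xᵢsᵢ` within `t/16` of `t`, since a single summand
`cosh(λ rᵢ) ≥ exp(λ|rᵢ|)/2` already exceeds `16n` once `|rᵢ| > 1/16`. For the Newton step,
`δx ⊥ δs` (one lies in `ker A`, the other in `range Aᵀ`), so squaring the scaled equation
`√(s̄/x̄) δx + √(x̄/s̄) δs = δ̄μ/√(x̄s̄)` gives `‖√(s̄/x̄) δx‖² + ‖√(x̄/s̄) δs‖² = ‖δ̄μ/√(x̄s̄)‖²`.
As `x̄ ≈ x`, `s̄ ≈ s` up to the factor `e^{1/48}` and `xs ≥ 15t/16`, both `δx/x` and `δs/s` are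
bounded by `e^{1/24}·16/(15t)·‖δ̄μ‖`.
-/

open Matrix

/-- The ℓ2 norm. -/
noncomputable def l2 {n : ℕ} (u : Fin n → ℝ) : ℝ := Real.sqrt (∑ i, (u i) ^ 2)

open Finset Real

lemma exp_abs_le_two_mul_cosh (y : ℝ) : exp |y| ≤ 2 * cosh y := by
  rw [cosh_eq]
  rcases abs_choice y with h | h <;> rw [h] <;> linarith [exp_pos y, exp_pos (-y)]

lemma mul_abs_le_log_of_cosh_mul_le {lam r M : ℝ} (hlam : 0 ≤ lam) (h : cosh (lam * r) ≤ M) :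
    lam * |r| ≤ log (2 * M) := by
  have hM : 0 < 2 * M := by linarith [one_le_cosh (lam * r)]
  rw [← abs_of_nonneg hlam, ← abs_mul, le_log_iff_exp_le hM]
  linarith [exp_abs_le_two_mul_cosh (lam * r)]

lemma abs_sub_le_of_sum_cosh_le {ι : Type*} [Fintype ι] {p : ι → ℝ} {lam t M : ℝ}
    (hlam : 0 < lam) (ht : 0 < t) (h : ∑ i, cosh (lam * ((p i - t) / t)) ≤ M) (i : ι) :
    |p i - t| ≤ t * log (2 * M) / lam := by
  have hi := mul_abs_le_log_of_cosh_mul_le hlam.le <|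
    (single_le_sum (f := fun j => cosh (lam * ((p j - t) / t))) (fun j _ => (cosh_pos _).le)
      (mem_univ i)).trans h
  rw [abs_div, abs_of_pos ht, mul_div_assoc', div_le_iff₀ ht] at hi
  rw [le_div_iff₀ hlam]
  linarith

lemma abs_sub_le_of_sum_cosh_le_of_eq_log {n : ℕ} {p : Fin n → ℝ} {lam t : ℝ} (ht : 0 < t)
    (hlam_pos : 0 < lam) (hlam : lam = 16 * log (40 * n))
    (h : ∑ i, cosh (lam * ((p i - t) / t)) ≤ 16 * n) (i : Fin n) : |p i - t| ≤ t / 16 := by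
  refine (abs_sub_le_of_sum_cosh_le hlam_pos ht h i).trans ?_
  have hn : 0 < (n : ℝ) := Nat.cast_pos.2 <| Nat.pos_of_ne_zero <| by
    rintro rfl
    norm_num [hlam] at hlam_pos
  rw [div_le_div_iff₀ hlam_pos (by norm_num), hlam]
  have := log_le_log (by positivity) (by linarith : 2 * (16 * (n : ℝ)) ≤ 40 * n)
  nlinarith

lemma le_exp_mul_of_log_sub_le {a b ε : ℝ} (ha : 0 < a) (hb : 0 < b)
    (h : log a - log b ≤ ε) : a ≤ exp ε * b := by
  calc a = exp (log a) := (exp_log ha).symm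
    _ ≤ exp (ε + log b) := exp_le_exp.2 (by linarith)
    _ = exp ε * b := by rw [exp_add, exp_log hb]

lemma abs_le_linf {n : ℕ} (u : Fin n → ℝ) (i : Fin n) : |u i| ≤ linf u :=
  le_ciSup (f := fun j => |u j|) (Set.finite_range _).bddAbove i

lemma le_exp_mul_of_linf_log_sub_le {n : ℕ} {u v : Fin n → ℝ} {ε : ℝ} (hu : ∀ i, 0 < u i)
    (hv : ∀ i, 0 < v i) (h : linf (fun i => log (u i) - log (v i)) ≤ ε) (i : Fin n) :
    u i ≤ exp ε * v i ∧ v i ≤ exp ε * u i := by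
  have hi := abs_le.1 ((abs_le_linf _ i).trans h)
  exact ⟨le_exp_mul_of_log_sub_le (hu i) (hv i) (by linarith),
    le_exp_mul_of_log_sub_le (hv i) (hu i) (by linarith)⟩

lemma l2_le_mul_l2_of_sum_sq_le {n : ℕ} {u v : Fin n → ℝ} {C : ℝ} (hC : 0 ≤ C)
    (h : ∑ i, u i ^ 2 ≤ C ^ 2 * ∑ i, v i ^ 2) : l2 u ≤ C * l2 v := by
  calc l2 u ≤ sqrt (C ^ 2 * ∑ i, v i ^ 2) := sqrt_le_sqrt h
    _ = C * l2 v := by rw [sqrt_mul (sq_nonneg C), sqrt_sq hC, l2]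

theorem Matrix.dotProduct_eq_zero_of_mulVec_eq_zero {R m n : Type*} [CommRing R] [Fintype m]
    [Fintype n] {A : Matrix m n R} {u v : n → R} {y : m → R} (hu : A *ᵥ u = 0)
    (hv : Aᵀ *ᵥ y + v = 0) : u ⬝ᵥ v = 0 := by
  rw [eq_neg_of_add_eq_zero_right hv, dotProduct_neg, dotProduct_mulVec, vecMul_transpose, hu,
    zero_dotProduct, neg_zero]

section CoordinateBounds

variable {x s xb sb δ κ m : ℝ}

lemma div_sq_le_weighted (hx : 0 < x) (hs : 0 < s) (hxb : 0 < xb) (hm : 0 < m)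
    (hxs : m ≤ x * s) (hxb_le : xb ≤ κ * x) (hs_le : s ≤ κ * sb) :
    (δ / x) ^ 2 ≤ κ ^ 2 / m * (sb / xb * δ ^ 2) := by
  have hκ : 0 < κ := pos_of_mul_pos_left (hxb.trans_le hxb_le) hx.le
  have key : m * xb ≤ κ ^ 2 * sb * x ^ 2 := by
    calc m * xb ≤ x * s * (κ * x) := mul_le_mul hxs hxb_le hxb.le (by positivity)
      _ ≤ x * (κ * sb) * (κ * x) := by gcongr
      _ = κ ^ 2 * sb * x ^ 2 := by ring
  calc (δ / x) ^ 2 = δ ^ 2 * (1 / x ^ 2) := by ring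
    _ ≤ δ ^ 2 * (κ ^ 2 * sb / (m * xb)) := by
        refine mul_le_mul_of_nonneg_left ?_ (sq_nonneg δ)
        rw [div_le_div_iff₀ (by positivity) (by positivity)]
        linarith
    _ = κ ^ 2 / m * (sb / xb * δ ^ 2) := by ring

lemma sq_div_mul_le_of_le_mul (hx : 0 < x) (hs : 0 < s) (hxb : 0 < xb) (hsb : 0 < sb) (hm : 0 < m)
    (hxs : m ≤ x * s) (hx_le : x ≤ κ * xb) (hs_le : s ≤ κ * sb) :
    δ ^ 2 / (xb * sb) ≤ κ ^ 2 / m * δ ^ 2 := by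
  have key : m ≤ κ ^ 2 * (xb * sb) := by
    calc m ≤ x * s := hxs
      _ ≤ κ * xb * (κ * sb) := mul_le_mul hx_le hs_le hs.le (hx.le.trans hx_le)
      _ = κ ^ 2 * (xb * sb) := by ring
  rw [div_mul_eq_mul_div, div_le_div_iff₀ (by positivity) hm]
  nlinarith [mul_le_mul_of_nonneg_left key (sq_nonneg δ)]

end CoordinateBounds

section NewtonSystem

variable {ι : Type*} [Fintype ι] {x s xb sb δx δs δμ : ι → ℝ} {κ m : ℝ}

theorem sum_weighted_sq_add_eq (hxb : ∀ i, xb i ≠ 0) (hsb : ∀ i, sb i ≠ 0)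
    (hN : ∀ i, sb i * δx i + xb i * δs i = δμ i) (horth : ∑ i, δx i * δs i = 0) :
    ∑ i, sb i / xb i * δx i ^ 2 + ∑ i, xb i / sb i * δs i ^ 2 = ∑ i, δμ i ^ 2 / (xb i * sb i) := by
  have hi : ∀ i, δμ i ^ 2 / (xb i * sb i)
      = sb i / xb i * δx i ^ 2 + xb i / sb i * δs i ^ 2 + 2 * (δx i * δs i) := by
    intro i
    rw [← hN i]
    field_simp [hxb i, hsb i]
    ring
  simp only [hi, sum_add_distrib, ← mul_sum, horth, mul_zero, add_zero]

theorem sum_div_sq_le_of_newton (hm : 0 < m) (hx : ∀ i, 0 < x i) (hs : ∀ i, 0 < s i)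
    (hxb : ∀ i, 0 < xb i) (hsb : ∀ i, 0 < sb i) (hxs : ∀ i, m ≤ x i * s i)
    (hxb_le : ∀ i, xb i ≤ κ * x i) (hx_le : ∀ i, x i ≤ κ * xb i) (hs_le : ∀ i, s i ≤ κ * sb i)
    (hN : ∀ i, sb i * δx i + xb i * δs i = δμ i) (horth : ∑ i, δx i * δs i = 0) :
    ∑ i, (δx i / x i) ^ 2 ≤ (κ ^ 2 / m) ^ 2 * ∑ i, δμ i ^ 2 := by
  have hκ : 0 ≤ κ ^ 2 / m := by positivity
  have henergy := sum_weighted_sq_add_eq (fun i => (hxb i).ne') (fun i => (hsb i).ne') hN horth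
  have hδs : 0 ≤ ∑ i, xb i / sb i * δs i ^ 2 :=
    sum_nonneg fun i _ => mul_nonneg (div_nonneg (hxb i).le (hsb i).le) (sq_nonneg _)
  calc ∑ i, (δx i / x i) ^ 2 ≤ ∑ i, κ ^ 2 / m * (sb i / xb i * δx i ^ 2) :=
        sum_le_sum fun i _ => div_sq_le_weighted (hx i) (hs i) (hxb i) hm (hxs i)
          (hxb_le i) (hs_le i)
    _ ≤ κ ^ 2 / m * ∑ i, δμ i ^ 2 / (xb i * sb i) := by
        rw [← mul_sum]
        exact mul_le_mul_of_nonneg_left (by linarith) hκ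
    _ ≤ κ ^ 2 / m * ∑ i, κ ^ 2 / m * δμ i ^ 2 := by
        gcongr with i
        exact sq_div_mul_le_of_le_mul (hx i) (hs i) (hxb i) (hsb i) hm (hxs i) (hx_le i) (hs_le i)
    _ = (κ ^ 2 / m) ^ 2 * ∑ i, δμ i ^ 2 := by rw [← mul_sum]; ring

end NewtonSystem

theorem robust_step_basic_general {d n : ℕ} (hn : 1 ≤ n)
    (A : Matrix (Fin d) (Fin n) ℝ) (b : Fin d → ℝ) (c : Fin n → ℝ)
    (t : ℝ) (ht : 0 < t)
    (x s : Fin n → ℝ)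
    (hx : A.mulVec x = b ∧ ∀ i, 0 < x i)
    (hs : (∃ y : Fin d → ℝ, Aᵀ.mulVec y + s = c) ∧ ∀ i, 0 < s i)
    (lam : ℝ) (hlam : lam = 16 * Real.log (40 * n))
    (hΦ : ∑ i, Real.cosh (lam * ((x i * s i - t) / t)) ≤ 16 * n)
    (xb sb : Fin n → ℝ) (hxb : ∀ i, 0 < xb i) (hsb : ∀ i, 0 < sb i)
    (hxc : linf (fun i => Real.log (xb i) - Real.log (x i)) ≤ 1 / 48)
    (hsc : linf (fun i => Real.log (sb i) - Real.log (s i)) ≤ 1 / 48)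
    (δμb : Fin n → ℝ) (hδμb : l2 δμb ≤ t / (32 * lam))
    (δx δs : Fin n → ℝ) (δy : Fin d → ℝ)
    (hsys : (Matrix.diagonal sb).mulVec δx + (Matrix.diagonal xb).mulVec δs = δμb ∧
            A.mulVec δx = 0 ∧ Aᵀ.mulVec δy + δs = 0) :
    linf (fun i => x i * s i - t) ≤ t / 16 ∧
    l2 (fun i => δx i / x i) ≤ 1 / (16 * lam) ∧
    l2 (fun i => δs i / s i) ≤ 1 / (16 * lam) := by
  obtain ⟨hdiag, hAδx, hδs⟩ := hsys
  have hlam_pos : 0 < lam := by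
    have : (1 : ℝ) ≤ n := by exact_mod_cast hn
    rw [hlam]
    linarith [log_pos (by linarith : (1 : ℝ) < 40 * n)]
  have hgap := abs_sub_le_of_sum_cosh_le_of_eq_log ht hlam_pos hlam hΦ
  have hxs : ∀ i, 15 / 16 * t ≤ x i * s i := fun i => by linarith [(abs_le.1 (hgap i)).1]
  have hxr := le_exp_mul_of_linf_log_sub_le hxb hx.2 hxc
  have hsr := le_exp_mul_of_linf_log_sub_le hsb hs.2 hsc
  have hNewton : ∀ i, sb i * δx i + xb i * δs i = δμb i := fun i => by
    simpa [mulVec_diagonal] using congrFun hdiag i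
  have horth : ∑ i, δx i * δs i = 0 := dotProduct_eq_zero_of_mulVec_eq_zero hAδx hδs
  have hC : exp (1 / 48) ^ 2 / (15 / 16 * t) * l2 δμb ≤ 1 / (16 * lam) := by
    have hκ : exp (1 / 48) ^ 2 ≤ 24 / 23 := by
      rw [← exp_nat_mul]
      convert exp_bound_div_one_sub_of_interval (x := 1 / 24) (by norm_num) (by norm_num) using 1
        <;> norm_num
    refine (mul_le_mul_of_nonneg_left hδμb (by positivity)).trans ?_
    rw [div_mul_div_comm, div_le_div_iff₀ (by positivity) (by positivity)]
    nlinarith [mul_le_mul_of_nonneg_right hκ (mul_pos ht hlam_pos).le]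
  refine ⟨Real.iSup_le hgap (by positivity), ?_, ?_⟩ <;>
    refine (l2_le_mul_l2_of_sum_sq_le (by positivity) ?_).trans hC
  · exact sum_div_sq_le_of_newton (by positivity) hx.2 hs.2 hxb hsb hxs (fun i => (hxr i).1)
      (fun i => (hxr i).2) (fun i => (hsr i).2) hNewton horth
  · exact sum_div_sq_le_of_newton (by positivity) hs.2 hx.2 hsb hxb
      (fun i => (hxs i).trans_eq (mul_comm _ _)) (fun i => (hsr i).1) (fun i => (hsr i).2)
      (fun i => (hxr i).2) (fun i => (add_comm _ _).trans (hNewton i))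
      (by simpa only [mul_comm] using horth)

/-- Basic bounds on a robust step: under the invariant `Φ((xs − t·1)/t) ≤ 16n` with
`λ = 16 log(40n)`, and a step solving the barred Newton system with
`‖δ̄μ‖₂ ≤ t/(32λ)`, one has `‖xs − t·1‖_∞ ≤ t/16`, `‖δx/x‖₂ ≤ 1/(16λ)` and
`‖δs/s‖₂ ≤ 1/(16λ)`. -/
theorem robust_step_basic {d n : ℕ} (hn : 1 ≤ n)
    (A : Matrix (Fin d) (Fin n) ℝ) (b : Fin d → ℝ) (c : Fin n → ℝ)
    (hA : A.rank = d)
    (t : ℝ) (ht : 0 < t)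
    (x s : Fin n → ℝ)
    (hx : A.mulVec x = b ∧ ∀ i, 0 < x i)
    (hs : (∃ y : Fin d → ℝ, Aᵀ.mulVec y + s = c) ∧ ∀ i, 0 < s i)
    (lam : ℝ) (hlam : lam = 16 * Real.log (40 * n))
    (hΦ : ∑ i, Real.cosh (lam * ((x i * s i - t) / t)) ≤ 16 * n)
    (xb sb : Fin n → ℝ) (hxb : ∀ i, 0 < xb i) (hsb : ∀ i, 0 < sb i)
    (hxc : linf (fun i => Real.log (xb i) - Real.log (x i)) ≤ 1 / 48)
    (hsc : linf (fun i => Real.log (sb i) - Real.log (s i)) ≤ 1 / 48)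
    (δμb : Fin n → ℝ) (hδμb : l2 δμb ≤ t / (32 * lam))
    (δx δs : Fin n → ℝ) (δy : Fin d → ℝ)
    (hsys : (Matrix.diagonal sb).mulVec δx + (Matrix.diagonal xb).mulVec δs = δμb ∧
            A.mulVec δx = 0 ∧ Aᵀ.mulVec δy + δs = 0) :
    linf (fun i => x i * s i - t) ≤ t / 16 ∧
    l2 (fun i => δx i / x i) ≤ 1 / (16 * lam) ∧
    l2 (fun i => δs i / s i) ≤ 1 / (16 * lam) :=
  robust_step_basic_general hn A b c t ht x s hx hs lam hlam hΦ xb sb hxb hsb hxc hsc δμb hδμb δx δs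
    δy hsys
end

section
/- For any integers m ≥ 1 and 0 ≤ k' < k with k − k' ≤ 2^m, there exist an integer s ≤ 2m and integers k' = k₀ < k₁ < ⋯ < k_s = k such that for every 0 ≤ j < s, the difference k_{j+1} − k_j is a power of 2 and k_{j+1} − k_j divides k_{j+1}. -/
/-- A dyadic chain from `x` to `k` of length `s`. -/
def DChain (x k s : ℕ) (ks : ℕ → ℕ) : Prop :=
  ks 0 = x ∧ ks s = k ∧
  (∀ j < s, ks j < ks (j + 1)) ∧
  (∀ j < s, ∃ e : ℕ, ks (j + 1) - ks j = 2 ^ e) ∧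
  (∀ j < s, (ks (j + 1) - ks j) ∣ ks (j + 1))

lemma dchain_trivial (k : ℕ) : DChain k k 0 (fun _ => k) := by
  refine ⟨rfl, rfl, ?_, ?_, ?_⟩ <;> intro j hj <;> omega

lemma dchain_prepend {y k s : ℕ} {ks : ℕ → ℕ} (h : DChain y k s ks)
    (x : ℕ) (hxy : x < y) (e : ℕ) (he : y - x = 2 ^ e) (hd : (y - x) ∣ y) :
    DChain x k (s + 1) (fun j => if j = 0 then x else ks (j - 1)) := by
  obtain ⟨h0, hs, hlt, hpow, hdvd⟩ := h
  refine ⟨by simp, by simp [hs], ?_, ?_, ?_⟩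
  · intro j hj
    match j with
    | 0 => simpa [h0] using hxy
    | i + 1 => simpa using hlt i (by omega)
  · intro j hj
    match j with
    | 0 => exact ⟨e, by simpa [h0] using he⟩
    | i + 1 => simpa using hpow i (by omega)
  · intro j hj
    match j with
    | 0 => simpa [h0] using hd
    | i + 1 => simpa using hdvd i (by omega)

/-- Phase 2: from a point divisible by `2^v`, cross a gap `d < 2^v` in at most `v` steps. -/
lemma dchain_phase2 : ∀ d : ℕ, ∀ v x : ℕ, 0 < d → d < 2 ^ v → 2 ^ v ∣ x →
    ∃ s ks, s ≤ v ∧ DChain x (x + d) s ks := by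
  intro d
  induction d using Nat.strong_induction_on with
  | _ d ih =>
    intro v x hd hdv hvx
    set e := Nat.log 2 d with he
    have h1 : 2 ^ e ≤ d := Nat.pow_log_le_self 2 (by omega)
    have h2 : d < 2 ^ (e + 1) := Nat.lt_pow_succ_log_self (by omega) d
    have hev : e < v := by
      by_contra h
      have : 2 ^ v ≤ 2 ^ e := Nat.pow_le_pow_right (by norm_num) (by omega)
      omega
    have hxe : 2 ^ (e + 1) ∣ x := (pow_dvd_pow 2 (by omega)).trans hvx
    have hstep : 2 ^ e ∣ x + 2 ^ e := by
      exact dvd_add ((pow_dvd_pow 2 (by omega)).trans hxe) dvd_rfl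
    by_cases hd' : d - 2 ^ e = 0
    · -- single step
      have hde : d = 2 ^ e := by omega
      refine ⟨1, _, by omega, dchain_prepend (dchain_trivial (x + d)) x (by omega) e
        (by omega) ?_⟩
      have : x + d - x = 2 ^ e := by omega
      rw [this, hde]; exact hstep
    · obtain ⟨s, ks, hs, hc⟩ := ih (d - 2 ^ e) (by omega) e (x + 2 ^ e) (by omega)
        (by omega) hstep
      have heq : x + 2 ^ e + (d - 2 ^ e) = x + d := by omega
      rw [heq] at hc
      refine ⟨s + 1, _, by omega, dchain_prepend hc x (by omega) e (by omega) ?_⟩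
      have : x + 2 ^ e - x = 2 ^ e := by omega
      rw [this]; exact hstep

/-- Phase 1 + combine. -/
lemma dchain_phase1 (m : ℕ) (hm : 1 ≤ m) :
    ∀ r v x k : ℕ, m - v = r → v ≤ m → 2 ^ v ∣ x → x < k → k - x ≤ 2 ^ m →
    ∃ s ks, s ≤ m + (m - v) ∧ DChain x k s ks := by
  intro r
  induction r with
  | zero =>
    intro v x k hr hvm hvx hxk hgap
    have hv : v = m := by omega
    subst hv
    rcases lt_or_eq_of_le (show k - x ≤ 2 ^ v from hgap) with h | h
    · obtain ⟨s, ks, hs, hc⟩ := dchain_phase2 (k - x) v x (by omega) h hvx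
      have : x + (k - x) = k := by omega
      rw [this] at hc
      exact ⟨s, ks, by omega, hc⟩
    · -- single step of size 2^v
      refine ⟨1, _, by omega, dchain_prepend (dchain_trivial k) x hxk v h ?_⟩
      rw [h]
      have : k = x + 2 ^ v := by omega
      rw [this]; exact dvd_add hvx dvd_rfl
  | succ r ihr =>
    intro v x k hr hvm hvx hxk hgap
    have hvm' : v < m := by omega
    set d := k - x with hd
    rcases Nat.lt_trichotomy d (2 ^ v) with h | h | h
    · -- gap smaller than 2^v : phase 2 directly
      obtain ⟨s, ks, hs, hc⟩ := dchain_phase2 d v x (by omega) h hvx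
      have : x + d = k := by omega
      rw [this] at hc
      exact ⟨s, ks, by omega, hc⟩
    · -- gap exactly 2^v : single step
      refine ⟨1, _, by omega, dchain_prepend (dchain_trivial k) x hxk v (by omega) ?_⟩
      rw [show k - x = 2 ^ v from by omega, show k = x + 2 ^ v from by omega]
      exact dvd_add hvx dvd_rfl
    · -- gap bigger than 2^v
      by_cases h2 : 2 ^ (v + 1) ∣ x
      · obtain ⟨s, ks, hs, hc⟩ := ihr (v + 1) x k (by omega) (by omega) h2 hxk hgap
        exact ⟨s, ks, by omega, hc⟩
      · -- x = 2^v * odd ; step to x + 2^v, divisible by 2^(v+1)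
        obtain ⟨c, hc⟩ := hvx
        have hcodd : ¬ 2 ∣ c := by
          intro ⟨t, ht⟩
          exact h2 ⟨t, by rw [hc, ht]; ring⟩
        have hceven : 2 ∣ c + 1 := by
          rcases Nat.even_or_odd c with he | ho
          · exact absurd he.two_dvd hcodd
          · obtain ⟨t, ht⟩ := ho; exact ⟨t + 1, by omega⟩
        have hstep2 : 2 ^ (v + 1) ∣ x + 2 ^ v := by
          obtain ⟨t, ht⟩ := hceven
          refine ⟨t, ?_⟩
          calc x + 2 ^ v = 2 ^ v * (c + 1) := by rw [hc]; ring
            _ = 2 ^ v * (2 * t) := by rw [ht]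
            _ = 2 ^ (v + 1) * t := by rw [pow_succ]; ring
        obtain ⟨s, ks, hs, hc'⟩ := ihr (v + 1) (x + 2 ^ v) k (by omega) (by omega)
          hstep2 (by omega) (by omega)
        refine ⟨s + 1, _, by omega, dchain_prepend hc' x (by omega) v (by omega) ?_⟩
        have h3 : x + 2 ^ v - x = 2 ^ v := by omega
        rw [h3]
        exact dvd_add ⟨c, hc⟩ dvd_rfl

/-- Dyadic chain: for integers `0 ≤ k' < k` with `k − k' ≤ 2^m` (`m ≥ 1`), there is a
chain `k' = k₀ < k₁ < ⋯ < k_s = k` with `s ≤ 2m` such that each difference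
`k_{j+1} − k_j` is a power of `2` dividing `k_{j+1}`. -/
theorem dyadic_chain (m k k' : ℕ) (hm : 1 ≤ m) (hk' : k' < k) (hgap : k - k' ≤ 2 ^ m) :
    ∃ (s : ℕ) (ks : ℕ → ℕ),
      s ≤ 2 * m ∧
      ks 0 = k' ∧ ks s = k ∧
      (∀ j < s, ks j < ks (j + 1)) ∧
      (∀ j < s, ∃ e : ℕ, ks (j + 1) - ks j = 2 ^ e) ∧
      (∀ j < s, (ks (j + 1) - ks j) ∣ ks (j + 1)) := by
  obtain ⟨s, ks, hs, h0, hk, hlt, hpow, hdvd⟩ :=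
    dchain_phase1 m hm m 0 k' k (by omega) (by omega) (one_dvd _) hk' hgap
  exact ⟨s, ks, by omega, h0, hk, hlt, hpow, hdvd⟩
end

section
/- Suppose the LP min{cᵀx : Ax = b, x ≥ 0} has nonempty feasible region P, outer radius R (‖x‖₂ ≤ R for all x ∈ P), ‖c‖_∞ ≤ L, and A has full row rank. Let R̄ ≥ 10R and t ≥ 8LR̄, and define x_c⁺, x_∘, x_c⁻, c̃, b̃ as in the modified LP. Then the primal point (x_c⁺, x_c⁻, R̄) lies in P_{R̄,t} with all coordinates strictly positive, the dual point (s⁺, s⁻, s^θ) = (t/x_c⁺, t/x_c⁻, t/R̄) lies in D_{R̄,t} (witnessed by y = 0 and λ = −t/R̄) with all coordinates strictly positive, and the componentwise product of the primal and dual points equals t in every coordinate; that is, (x_c⁺, x_c⁻, R̄) is on the central path of the modified LP at parameter t. -/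
open Matrix

/-!
Full row rank makes `A Aᵀ` invertible, so `x_∘ = Aᵀ(AAᵀ)⁻¹b` solves `Ax = b`; being in the row
space of `A`, it is orthogonal to `ker A` and hence the least-norm solution. Comparing it with
any feasible point gives `|(x_∘)_i| ≤ ‖x_∘‖₂ ≤ R`. On the other hand `|c_i| ≤ L ≤ t/(8R̄)` gives
`(x_c⁺)_i ≥ 8R̄/9 > R`, so `x_c⁻ = x_c⁺ − x_∘ > 0`. Everything else is a direct computation
with `y = 0`, `λ = −t/R̄`.
-/

namespace Matrix

variable {m n : Type*} [Fintype m] [Fintype n]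

theorem isUnit_of_rank_eq_card {K : Type*} [Field K] [DecidableEq m] {M : Matrix m m K}
    (hM : M.rank = Fintype.card m) : IsUnit M := by
  rw [← mulVec_surjective_iff_isUnit]
  have hrange : LinearMap.range M.mulVecLin = ⊤ := by
    refine Submodule.eq_top_of_finrank_eq ?_
    rw [← rank, hM, Module.finrank_fintype_fun_eq_card]
  exact LinearMap.range_eq_top.1 hrange

theorem isUnit_mul_transpose_of_rank_eq_card {K : Type*} [Field K] [LinearOrder K]
    [IsStrictOrderedRing K] [DecidableEq m] {A : Matrix m n K}
    (hA : A.rank = Fintype.card m) : IsUnit (A * Aᵀ) :=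
  isUnit_of_rank_eq_card (by rw [rank_self_mul_transpose, hA])

theorem mulVec_transpose_mulVec_inv_mulVec {K : Type*} [CommRing K] [DecidableEq m]
    {A : Matrix m n K} (hA : IsUnit (A * Aᵀ)) (b : m → K) :
    A *ᵥ (Aᵀ *ᵥ ((A * Aᵀ)⁻¹ *ᵥ b)) = b := by
  rw [mulVec_mulVec, mulVec_mulVec, mul_nonsing_inv _ ((isUnit_iff_isUnit_det _).1 hA),
    one_mulVec]

theorem sum_sq_transpose_mulVec_le {K : Type*} [CommRing K] [LinearOrder K]
    [IsStrictOrderedRing K] (A : Matrix m n K) (w : m → K) {x : n → K}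
    (hx : A *ᵥ x = A *ᵥ (Aᵀ *ᵥ w)) : ∑ i, (Aᵀ *ᵥ w) i ^ 2 ≤ ∑ i, x i ^ 2 := by
  have horth : (Aᵀ *ᵥ w) ⬝ᵥ (x - Aᵀ *ᵥ w) = 0 := by
    rw [mulVec_transpose, ← dotProduct_mulVec, mulVec_sub, ← mulVec_transpose, hx, sub_self,
      dotProduct_zero]
  generalize Aᵀ *ᵥ w = u at horth ⊢
  have hsplit : ∑ i, x i ^ 2 = ∑ i, u i ^ 2 + 2 * (u ⬝ᵥ (x - u)) + ∑ i, (x i - u i) ^ 2 := by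
    simp only [dotProduct, Pi.sub_apply, Finset.mul_sum, ← Finset.sum_add_distrib]
    exact Finset.sum_congr rfl fun i _ => by ring
  have hnonneg : 0 ≤ ∑ i, (x i - u i) ^ 2 := Finset.sum_nonneg fun i _ => sq_nonneg _
  linarith

end Matrix

theorem abs_le_sqrt_sum_sq {ι : Type*} [Fintype ι] (v : ι → ℝ) (i : ι) :
    |v i| ≤ √(∑ j, v j ^ 2) :=
  Real.abs_le_sqrt <| Finset.single_le_sum (f := fun j => v j ^ 2)
    (fun _ _ => sq_nonneg _) (Finset.mem_univ i)

theorem mul_le_div_add_div_of_abs_le {c L Rb t : ℝ} (hc : |c| ≤ L) (hRb : 0 < Rb)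
    (ht : 0 < t) (hL : 8 * L * Rb ≤ t) : 8 / 9 * Rb ≤ t / (c + t / Rb) := by
  have h8L : 8 * L ≤ t / Rb := (le_div_iff₀ hRb).2 hL
  obtain ⟨hLc, hcL⟩ := abs_le.1 hc
  have hpos : 0 < c + t / Rb := by linarith [abs_nonneg c, div_pos ht hRb]
  rw [le_div_iff₀ hpos]
  calc 8 / 9 * Rb * (c + t / Rb) ≤ 8 / 9 * Rb * (9 / 8 * (t / Rb)) := by gcongr; linarith
    _ = t := by field_simp

/-- The explicit point `(x_c⁺, x_c⁻, R̄)` is on the central path of the modified LP at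
parameter `t`: it lies in `P_{R̄,t}` with strictly positive coordinates, the point
`(t/x_c⁺, t/x_c⁻, t/R̄)` lies in `D_{R̄,t}` (witnessed by `y = 0`, `λ = −t/R̄`) with
strictly positive coordinates, and all componentwise primal-dual products equal `t`. -/
theorem modified_LP_central_path_point {d n : ℕ}
    (A : Matrix (Fin d) (Fin n) ℝ) (b : Fin d → ℝ) (c : Fin n → ℝ)
    (R L Rb t : ℝ)
    (hA : A.rank = d)
    (hP : ∃ x : Fin n → ℝ, A.mulVec x = b ∧ ∀ i, 0 ≤ x i)
    (hR : ∀ x : Fin n → ℝ, A.mulVec x = b → (∀ i, 0 ≤ x i) →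
      Real.sqrt (∑ i, (x i) ^ 2) ≤ R)
    (hc : ∀ i, |c i| ≤ L)
    (hRb : 10 * R ≤ Rb) (hRbpos : 0 < Rb)
    (ht : 8 * L * Rb ≤ t) (htpos : 0 < t)
    (xcp : Fin n → ℝ) (hxcp : xcp = fun i => t / (c i + t / Rb))
    (xo : Fin n → ℝ) (hxo : xo = Aᵀ.mulVec ((A * Aᵀ)⁻¹.mulVec b))
    (xcm : Fin n → ℝ) (hxcm : xcm = xcp - xo)
    (ctilde : Fin n → ℝ) (hct : ctilde = fun i => t / xcm i)
    (btilde : ℝ) (hbt : btilde = (∑ i, xcp i) + Rb) :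
    -- the primal point is strictly positive and lies in P_{R̄,t}
    (∀ i, 0 < xcp i) ∧ (∀ i, 0 < xcm i) ∧ 0 < Rb ∧
    A.mulVec (xcp - xcm) = b ∧ (∑ i, xcp i) + Rb = btilde ∧
    -- the dual point is strictly positive and lies in D_{R̄,t}, with y = 0, λ = −t/R̄
    (∀ i, 0 < t / xcp i) ∧ (∀ i, 0 < t / xcm i) ∧ 0 < t / Rb ∧
    (∀ i, Aᵀ.mulVec 0 i + (-(t / Rb)) + t / xcp i = c i) ∧
    (∀ i, -(Aᵀ.mulVec 0 i) + t / xcm i = ctilde i) ∧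
    (-(t / Rb) + t / Rb = 0) ∧
    -- all componentwise primal-dual products equal t
    (∀ i, xcp i * (t / xcp i) = t) ∧ (∀ i, xcm i * (t / xcm i) = t) ∧
    Rb * (t / Rb) = t := by
  obtain ⟨x₀, hAx₀, hx₀⟩ := hP
  have hR₀ : 0 ≤ R := (Real.sqrt_nonneg _).trans (hR x₀ hAx₀ hx₀)
  have hAxo : A *ᵥ xo = b := hxo ▸ mulVec_transpose_mulVec_inv_mulVec
    (isUnit_mul_transpose_of_rank_eq_card (by rw [hA, Fintype.card_fin])) b
  have hxo_le : ∀ i, |xo i| ≤ R := fun i => calc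
    |xo i| ≤ √(∑ j, xo j ^ 2) := abs_le_sqrt_sum_sq xo i
    _ ≤ √(∑ j, x₀ j ^ 2) := by
      rw [hxo] at hAxo ⊢
      exact Real.sqrt_le_sqrt (sum_sq_transpose_mulVec_le A _ (hAx₀.trans hAxo.symm))
    _ ≤ R := hR x₀ hAx₀ hx₀
  have hxcp_ge : ∀ i, 8 / 9 * Rb ≤ xcp i := fun i =>
    hxcp ▸ mul_le_div_add_div_of_abs_le (hc i) hRbpos htpos ht
  have hxcp_pos : ∀ i, 0 < xcp i := fun i => by linarith [hxcp_ge i]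
  have hxcm_pos : ∀ i, 0 < xcm i := fun i => by
    rw [hxcm, Pi.sub_apply]
    linarith [hxcp_ge i, (abs_le.1 (hxo_le i)).2]
  refine ⟨hxcp_pos, hxcm_pos, hRbpos, by rwa [hxcm, sub_sub_cancel], hbt.symm,
    fun i => div_pos htpos (hxcp_pos i), fun i => div_pos htpos (hxcm_pos i),
    div_pos htpos hRbpos, fun i => ?_, fun i => by simp [hct], neg_add_cancel _,
    fun i => mul_div_cancel₀ t (hxcp_pos i).ne', fun i => mul_div_cancel₀ t (hxcm_pos i).ne',
    mul_div_cancel₀ t hRbpos.ne'⟩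
  rw [hxcp, div_div_cancel₀ htpos.ne', mulVec_zero, Pi.zero_apply]
  ring
end

section
/- Suppose the LP min{cᵀx : Ax = b, x ≥ 0} has inner radius r > 0 (there exists v ∈ P with v_i ≥ r for all i), outer radius R (‖x‖₂ ≤ R for all x ∈ P), ‖c‖_∞ ≤ L with L > 0, and A has full row rank. Let R̄ ≥ 10R and t ≥ 8LR̄, and consider the modified LP. Suppose (x⁺, x⁻, x^θ) ∈ P_{R̄,t} and (s⁺, s⁻, s^θ) ∈ D_{R̄,t} are strictly positive componentwise and every componentwise product lies in [5LR/6, 7LR/6], i.e. x_i⁺ s_i⁺, x_i⁻ s_i⁻ ∈ [5LR/6, 7LR/6] for all i and x^θ s^θ ∈ [5LR/6, 7LR/6]. Then min_i x_i⁺ ≥ Rr/(10 n R̄) and max_i x_i⁻ ≤ (20 n L R̄/t)·R̄. -/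
/-!
Since `|c_i| ≤ L` is small against `t/R̄`, every `(x_c⁺)_i` is within a factor `9/8` of `R̄`;
`x_∘` is the least-norm solution of `Ax = b`, so `|(x_∘)_i| ≤ ‖v‖ ≤ R`, and hence `x_c⁻` is
also of order `R̄` and `c̃ = t/x_c⁻` is positive. The point `(v, 0, b̃ - ∑ v)` is feasible for
the modified LP, and the duality-gap identity compares it with `(x⁺, x⁻, x^θ)`:
`⟨v, s⁺⟩ + (b̃ - ∑ v) s^θ + ⟨c̃, x⁻⟩ = ⟨x, s⟩ + cᵀv - cᵀx⁺ ≤ 3nLR̄`.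
All three terms on the left are nonnegative, so `r s⁺_i ≤ 3nLR̄`, which with
`x⁺_i s⁺_i ≥ 5LR/6` bounds `x⁺_i` from below, and `c̃_i x⁻_i ≤ 3nLR̄` bounds `x⁻_i` from above.
-/

open Matrix

variable {m n : Type*} [Fintype m] [Fintype n]

theorem abs_le_of_sqrt_sum_sq_le {x : n → ℝ} {R : ℝ} (h : √(∑ j, x j ^ 2) ≤ R) (i : n) :
    |x i| ≤ R :=
  (Real.abs_le_sqrt (Finset.single_le_sum (fun j _ => sq_nonneg (x j)) (Finset.mem_univ i))).trans h

theorem abs_dotProduct_le {c x : n → ℝ} {L : ℝ} (hc : ∀ i, |c i| ≤ L) (hx : 0 ≤ x) :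
    |c ⬝ᵥ x| ≤ L * ∑ i, x i := by
  rw [Finset.mul_sum]
  refine (Finset.abs_sum_le_sum_abs _ _).trans (Finset.sum_le_sum fun i _ => ?_)
  rw [abs_mul, abs_of_nonneg (hx i)]
  exact mul_le_mul_of_nonneg_right (hc i) (hx i)

theorem dotProduct_le_card_mul {x s : n → ℝ} {M : ℝ} (h : ∀ i, x i * s i ≤ M) :
    x ⬝ᵥ s ≤ Fintype.card n * M := by
  simpa [dotProduct] using Finset.sum_le_card_nsmul Finset.univ _ M fun i _ => h i

theorem mul_le_dotProduct {x s : n → ℝ} (hx : 0 ≤ x) (hs : 0 ≤ s) (i : n) : x i * s i ≤ x ⬝ᵥ s :=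
  Finset.single_le_sum (f := fun j => x j * s j) (fun j _ => mul_nonneg (hx j) (hs j))
    (Finset.mem_univ i)

section LeastNorm

variable [DecidableEq m]

theorem Matrix.isUnit_mul_transpose_of_rank_eq {A : Matrix m n ℝ} (hA : A.rank = Fintype.card m) :
    IsUnit (A * Aᵀ) := by
  have hrange : LinearMap.range (A * Aᵀ).mulVecLin = ⊤ := by
    apply Submodule.eq_top_of_finrank_eq
    rw [← Matrix.rank, rank_self_mul_transpose, hA, Module.finrank_fintype_fun_eq_card]
  exact mulVec_surjective_iff_isUnit.mp (LinearMap.range_eq_top.mp hrange)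

theorem Matrix.mulVec_leastNorm {A : Matrix m n ℝ} (hA : IsUnit (A * Aᵀ)) (b : m → ℝ) :
    A *ᵥ (Aᵀ *ᵥ ((A * Aᵀ)⁻¹ *ᵥ b)) = b := by
  rw [mulVec_mulVec, mulVec_mulVec,
    mul_nonsing_inv _ ((isUnit_iff_isUnit_det _).mp hA), one_mulVec]

theorem Matrix.sum_sq_leastNorm_le {A : Matrix m n ℝ} (hA : IsUnit (A * Aᵀ)) {b : m → ℝ}
    {v : n → ℝ} (hv : A *ᵥ v = b) :
    ∑ i, (Aᵀ *ᵥ ((A * Aᵀ)⁻¹ *ᵥ b)) i ^ 2 ≤ ∑ i, v i ^ 2 := by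
  set w := (A * Aᵀ)⁻¹ *ᵥ b
  set x := Aᵀ *ᵥ w
  have horth : x ⬝ᵥ (v - x) = 0 := by
    have hAx : A *ᵥ x = b := mulVec_leastNorm hA b
    calc x ⬝ᵥ (v - x) = w ⬝ᵥ (A *ᵥ (v - x)) := by rw [dotProduct_mulVec, ← mulVec_transpose]
      _ = 0 := by rw [mulVec_sub, hv, hAx, sub_self, dotProduct_zero]
  have hsq : ∀ u : n → ℝ, ∑ i, u i ^ 2 = u ⬝ᵥ u := fun u => by simp only [dotProduct, sq]
  have hpyth : v ⬝ᵥ v = x ⬝ᵥ x + 2 * (x ⬝ᵥ (v - x)) + (v - x) ⬝ᵥ (v - x) := by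
    simp only [dotProduct_sub, sub_dotProduct, dotProduct_comm v x]; ring
  rw [hsq, hsq, hpyth, horth]
  linarith [(hsq (v - x)) ▸ Finset.sum_nonneg fun i _ => sq_nonneg ((v - x) i)]

theorem Matrix.abs_leastNorm_le_sqrt {A : Matrix m n ℝ} (hA : A.rank = Fintype.card m)
    {b : m → ℝ} {v : n → ℝ} (hv : A *ᵥ v = b) (i : n) :
    |(Aᵀ *ᵥ ((A * Aᵀ)⁻¹ *ᵥ b)) i| ≤ √(∑ i, v i ^ 2) :=
  abs_le_of_sqrt_sum_sq_le (Real.sqrt_le_sqrt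
    (sum_sq_leastNorm_le (isUnit_mul_transpose_of_rank_eq hA) hv)) i

end LeastNorm

theorem modified_duality_gap {A : Matrix m n ℝ} {b y : m → ℝ} {c ct xp xm sp sm : n → ℝ}
    {xθ sθ bt lam : ℝ} (hx : A *ᵥ (xp - xm) = b) (hsum : ∑ i, xp i + xθ = bt)
    (hsp : ∀ i, (Aᵀ *ᵥ y) i + lam + sp i = c i) (hsm : ∀ i, -(Aᵀ *ᵥ y) i + sm i = ct i)
    (hθ : lam + sθ = 0) :
    xp ⬝ᵥ sp + xm ⬝ᵥ sm + xθ * sθ = c ⬝ᵥ xp + ct ⬝ᵥ xm - (y ⬝ᵥ b + lam * bt) := by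
  have hsp' : sp = c - Aᵀ *ᵥ y - lam • 1 := funext fun i => by
    simp only [Pi.sub_apply, Pi.smul_apply, Pi.one_apply, smul_eq_mul, mul_one]; linarith [hsp i]
  have hsm' : sm = ct + Aᵀ *ᵥ y := funext fun i => by
    simp only [Pi.add_apply]; linarith [hsm i]
  have hy : xp ⬝ᵥ (Aᵀ *ᵥ y) - xm ⬝ᵥ (Aᵀ *ᵥ y) = y ⬝ᵥ b := by
    rw [← sub_dotProduct, ← hx, dotProduct_mulVec y, ← mulVec_transpose, dotProduct_comm]
  rw [hsp', hsm']
  simp only [dotProduct_sub, dotProduct_add, dotProduct_smul, dotProduct_one, smul_eq_mul,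
    dotProduct_comm xp c, dotProduct_comm xm ct]
  linear_combination -hy - lam * hsum + xθ * hθ

theorem modified_duality_gap_inner {A : Matrix m n ℝ} {b y : m → ℝ} {c ct v xp xm sp sm : n → ℝ}
    {xθ sθ bt lam : ℝ} (hv : A *ᵥ v = b) (hx : A *ᵥ (xp - xm) = b) (hsum : ∑ i, xp i + xθ = bt)
    (hsp : ∀ i, (Aᵀ *ᵥ y) i + lam + sp i = c i) (hsm : ∀ i, -(Aᵀ *ᵥ y) i + sm i = ct i)
    (hθ : lam + sθ = 0) :
    v ⬝ᵥ sp + (bt - ∑ i, v i) * sθ + ct ⬝ᵥ xm =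
      xp ⬝ᵥ sp + xm ⬝ᵥ sm + xθ * sθ + c ⬝ᵥ v - c ⬝ᵥ xp := by
  have hv' := modified_duality_gap (b := b) (xm := 0) (xθ := bt - ∑ i, v i) (by rwa [sub_zero])
    (add_sub_cancel _ _) hsp hsm hθ
  rw [modified_duality_gap hx hsum hsp hsm hθ]
  simp only [zero_dotProduct, dotProduct_zero, add_zero] at hv'
  linarith

theorem div_add_div_mem_Icc_of_abs_le {c L Rb t : ℝ} (hc : |c| ≤ L) (ht : 8 * L * Rb ≤ t)
    (hRb : 0 < Rb) (htpos : 0 < t) : t / (c + t / Rb) ∈ Set.Icc (8 * Rb / 9) (8 * Rb / 7) := by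
  obtain ⟨hcl, hcu⟩ := abs_le.mp hc
  have hu : 8 * L ≤ t / Rb := by rw [le_div_iff₀ hRb]; linarith
  have htu : t = t / Rb * Rb := by field_simp
  have hden : 0 < c + t / Rb := by linarith [div_pos htpos hRb]
  rw [Set.mem_Icc, le_div_iff₀ hden, div_le_iff₀ hden]
  constructor <;> nlinarith

theorem sub_div_add_div_mem_Ioc_of_abs_le {c xo L R Rb t : ℝ} (hc : |c| ≤ L) (hxo : |xo| ≤ R)
    (hRb : 10 * R ≤ Rb) (ht : 8 * L * Rb ≤ t) (hRbpos : 0 < Rb) (htpos : 0 < t) :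
    t / (c + t / Rb) - xo ∈ Set.Ioc 0 (5 * Rb / 4) := by
  obtain ⟨hlo, hhi⟩ := div_add_div_mem_Icc_of_abs_le hc ht hRbpos htpos
  obtain ⟨hxl, hxu⟩ := abs_le.mp hxo
  constructor <;> linarith

theorem modified_excess_le {n : ℕ} {c v xp xm sp sm xcp : Fin n → ℝ} {xθ sθ L R Rb : ℝ}
    (hn : 0 < n) (hL : 0 < L) (hR : 0 ≤ R) (hRb : 10 * R ≤ Rb) (hc : ∀ i, |c i| ≤ L)
    (hv0 : 0 ≤ v) (hvR : ∀ i, v i ≤ R) (hxp : 0 ≤ xp) (hxθ : 0 ≤ xθ)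
    (hsum : ∑ i, xp i + xθ = ∑ i, xcp i + Rb) (hxcp : ∀ i, xcp i ≤ 8 * Rb / 7)
    (hpp : ∀ i, xp i * sp i ≤ 7 * L * R / 6) (hpm : ∀ i, xm i * sm i ≤ 7 * L * R / 6)
    (hpθ : xθ * sθ ≤ 7 * L * R / 6) :
    xp ⬝ᵥ sp + xm ⬝ᵥ sm + xθ * sθ + c ⬝ᵥ v - c ⬝ᵥ xp ≤ 3 * n * L * Rb := by
  have hn1 : (1 : ℝ) ≤ n := by exact_mod_cast hn
  have hsp := dotProduct_le_card_mul hpp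
  have hsm := dotProduct_le_card_mul hpm
  have hcv := (le_abs_self _).trans (abs_dotProduct_le hc hv0)
  have hcx := (neg_le_abs _).trans (abs_dotProduct_le hc hxp)
  have hvsum : ∑ i, v i ≤ n * R := by
    simpa using Finset.sum_le_card_nsmul Finset.univ v R fun i _ => hvR i
  have hxpsum : ∑ i, xp i ≤ n * (8 * Rb / 7) + Rb := by
    have := Finset.sum_le_card_nsmul Finset.univ xcp _ fun i _ => hxcp i
    simp only [Finset.card_univ, Fintype.card_fin, nsmul_eq_mul] at this
    linarith
  simp only [Fintype.card_fin] at hsp hsm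
  have hnL : 0 ≤ (n : ℝ) * L := by positivity
  have hLR : 0 ≤ L * R := mul_nonneg hL.le hR
  have hLRb : 0 ≤ L * Rb := mul_nonneg hL.le (by linarith)
  linarith [mul_le_mul_of_nonneg_left hvsum hL.le, mul_le_mul_of_nonneg_left hxpsum hL.le,
    mul_le_mul_of_nonneg_left hRb hnL, mul_le_mul_of_nonneg_right hn1 hLR,
    mul_le_mul_of_nonneg_right hn1 hLRb]

theorem modified_primal_lower_bound {n : ℕ} {x s r L R Rb : ℝ} (hn : 0 < n) (hL : 0 < L)
    (hRb : 0 < Rb) (hr : 0 ≤ r) (hx : 0 ≤ x) (hxs : 5 * L * R / 6 ≤ x * s)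
    (hrs : r * s ≤ 3 * n * L * Rb) : R * r / (10 * n * Rb) ≤ x := by
  rw [div_le_iff₀ (by positivity)]
  have hLnRbx : 0 ≤ L * (n * Rb * x) := by positivity
  nlinarith [mul_le_mul_of_nonneg_left hrs hx, mul_le_mul_of_nonneg_left hxs hr]

theorem modified_primal_upper_bound {n : ℕ} {x ct xc L Rb t : ℝ} (hL : 0 < L) (hRb : 0 < Rb)
    (ht : 0 < t) (hxc : xc ∈ Set.Ioc 0 (5 * Rb / 4)) (hct : ct = t / xc)
    (hK : ct * x ≤ 3 * n * L * Rb) : x ≤ 20 * n * L * Rb / t * Rb := by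
  rw [div_mul_eq_mul_div, le_div_iff₀ ht, ← div_mul_cancel₀ t hxc.1.ne', ← hct]
  nlinarith [mul_le_mul_of_nonneg_right hK hxc.1.le, hxc.2, Nat.cast_nonneg (α := ℝ) n,
    mul_nonneg (mul_nonneg (Nat.cast_nonneg (α := ℝ) n) hL.le) hRb.le]

/-- For strictly positive primal-dual points of the modified LP whose componentwise
products all lie in `[5LR/6, 7LR/6]`, we have `min_i x_i⁺ ≥ Rr/(10nR̄)` and
`max_i x_i⁻ ≤ (20nLR̄/t)·R̄`. -/
theorem modified_LP_distance_bounds {d n : ℕ}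
    (A : Matrix (Fin d) (Fin n) ℝ) (b : Fin d → ℝ) (c : Fin n → ℝ)
    (r R L Rb t : ℝ)
    (hA : A.rank = d)
    (hr : 0 < r)
    (hinner : ∃ v : Fin n → ℝ, A.mulVec v = b ∧ ∀ i, r ≤ v i)
    (hR : ∀ x : Fin n → ℝ, A.mulVec x = b → (∀ i, 0 ≤ x i) →
      Real.sqrt (∑ i, (x i) ^ 2) ≤ R)
    (hc : ∀ i, |c i| ≤ L) (hL : 0 < L)
    (hRb : 10 * R ≤ Rb) (hRbpos : 0 < Rb)
    (ht : 8 * L * Rb ≤ t) (htpos : 0 < t)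
    -- data of the modified LP
    (xcp : Fin n → ℝ) (hxcp : xcp = fun i => t / (c i + t / Rb))
    (xo : Fin n → ℝ) (hxo : xo = Aᵀ.mulVec ((A * Aᵀ)⁻¹.mulVec b))
    (xcm : Fin n → ℝ) (hxcm : xcm = xcp - xo)
    (ctilde : Fin n → ℝ) (hct : ctilde = fun i => t / xcm i)
    (btilde : ℝ) (hbt : btilde = (∑ i, xcp i) + Rb)
    -- a strictly positive primal point of the modified LP
    (xp xm : Fin n → ℝ) (xθ : ℝ)
    (hxpos : (∀ i, 0 < xp i) ∧ (∀ i, 0 < xm i) ∧ 0 < xθ)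
    (hPmem : A.mulVec (xp - xm) = b ∧ (∑ i, xp i) + xθ = btilde)
    -- a strictly positive dual point of the modified LP
    (sp sm : Fin n → ℝ) (sθ : ℝ)
    (hspos : (∀ i, 0 < sp i) ∧ (∀ i, 0 < sm i) ∧ 0 < sθ)
    (hDmem : ∃ (y : Fin d → ℝ) (lam : ℝ),
      (∀ i, Aᵀ.mulVec y i + lam + sp i = c i) ∧
      (∀ i, -(Aᵀ.mulVec y i) + sm i = ctilde i) ∧
      lam + sθ = 0)
    -- all componentwise primal-dual products lie in [5LR/6, 7LR/6]
    (hprod : (∀ i, 5 * L * R / 6 ≤ xp i * sp i ∧ xp i * sp i ≤ 7 * L * R / 6) ∧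
             (∀ i, 5 * L * R / 6 ≤ xm i * sm i ∧ xm i * sm i ≤ 7 * L * R / 6) ∧
             (5 * L * R / 6 ≤ xθ * sθ ∧ xθ * sθ ≤ 7 * L * R / 6)) :
    (∀ i, R * r / (10 * n * Rb) ≤ xp i) ∧
    (∀ i, xm i ≤ 20 * n * L * Rb / t * Rb) := by
  obtain ⟨v, hv, hrv⟩ := hinner
  obtain ⟨hxp, hxm, hxθ⟩ := hxpos
  obtain ⟨hsp, -, hsθ⟩ := hspos
  obtain ⟨y, lam, hdp, hdm, hdθ⟩ := hDmem
  obtain ⟨hpp, hpm, hpθ⟩ := hprod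
  rcases Nat.eq_zero_or_pos n with rfl | hn
  · exact ⟨fun i => i.elim0, fun i => i.elim0⟩
  have hv0 : 0 ≤ v := fun i => hr.le.trans (hrv i)
  have hvR : ∀ i, v i ≤ R := fun i =>
    (le_abs_self _).trans (abs_le_of_sqrt_sum_sq_le (hR v hv hv0) i)
  have hR0 : 0 ≤ R := (Real.sqrt_nonneg _).trans (hR v hv hv0)
  have hxoR : ∀ i, |xo i| ≤ R := fun i =>
    hxo ▸ (abs_leastNorm_le_sqrt (by simpa using hA) hv i).trans (hR v hv hv0)
  have hxcp_mem : ∀ i, xcp i ∈ Set.Icc (8 * Rb / 9) (8 * Rb / 7) := fun i =>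
    hxcp ▸ div_add_div_mem_Icc_of_abs_le (hc i) ht hRbpos htpos
  have hxcm_mem : ∀ i, xcm i ∈ Set.Ioc 0 (5 * Rb / 4) := fun i =>
    hxcm ▸ hxcp ▸ sub_div_add_div_mem_Ioc_of_abs_le (hc i) (hxoR i) hRb ht hRbpos htpos
  have hθ : 0 ≤ (btilde - ∑ i, v i) * sθ := by
    refine mul_nonneg ?_ hsθ.le
    rw [hbt, sub_nonneg]
    linarith [Finset.sum_le_sum fun i (_ : i ∈ Finset.univ) =>
      (hvR i).trans (by linarith [(hxcp_mem i).1] : R ≤ xcp i)]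
  have hpot := (modified_duality_gap_inner hv hPmem.1 hPmem.2 hdp hdm hdθ).trans_le
    (modified_excess_le hn hL hR0 hRb hc hv0 hvR (fun i => (hxp i).le) hxθ.le (hbt ▸ hPmem.2)
      (fun i => (hxcp_mem i).2) (fun i => (hpp i).2) (fun i => (hpm i).2) hpθ.2)
  have hsp0 : 0 ≤ sp := fun i => (hsp i).le
  have hxm0 : 0 ≤ xm := fun i => (hxm i).le
  have hct0 : 0 ≤ ctilde := fun i => hct ▸ (div_pos htpos (hxcm_mem i).1).le
  have hvsp := dotProduct_nonneg_of_nonneg hv0 hsp0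
  have hctxm := dotProduct_nonneg_of_nonneg hct0 hxm0
  refine ⟨fun i => modified_primal_lower_bound hn hL hRbpos hr.le (hxp i).le (hpp i).1 ?_,
    fun i => modified_primal_upper_bound hL hRbpos htpos (hxcm_mem i) (congrFun hct i) ?_⟩
  · linarith [mul_le_mul_of_nonneg_right (hrv i) (hsp i).le, mul_le_dotProduct hv0 hsp0 i]
  · linarith [mul_le_dotProduct hct0 hxm0 i]
end
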